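/- arXiv:1705.06831 — 5 statements merged into one kernel-verified Lean document; each statement's English description precedes it below -/
import Mathlib

section
/- There exists a unique solution g : ℝ → ℝ (up to translation, normalized by g(0) = 0) to the ODE g''(t) = W'(g(t)) with g(0) = 0 and g(t) → ±1 as t → ±∞, and moreover g satisfies the first integral identity g'(t) = √(2 W(g(t))) > 0 for all t ∈ ℝ. -/
/-!
The heteroclinic is the inverse of the travel time `T x = ∫₀ˣ ds / √(2 W s)` on `(-1, 1)`. `T` is
strictly increasing, and since `W` vanishes to second order at `±1` the integrand is at least a
multiple of `1 / (1 ∓ s)` there, so `T` diverges logarithmically at both wells. Its inverse `g` is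
therefore defined on all of `ℝ`, solves `g' = √(2 W g)`, and hence `g'' = W' g`.

Conversely, along any solution the energy `g'² - 2 W g` is constant; it vanishes because `g → 1`
forces `g'` to be small at arbitrarily late times. A solution touching `±1` would do so with zero
velocity, hence be constant by ODE uniqueness at the rest point. So `g` stays in `(-1, 1)`,
`g' = √(2 W g) > 0`, and `T (g t) = t`, which pins `g` down as the inverse of `T`.
-/

open Real Filter MeasureTheory Set Topology

theorem isBigO_sub_sq_of_deriv_eq_zero {f : ℝ → ℝ} {a : ℝ} (hf : ContDiff ℝ 2 f)
    (hfa : f a = 0) (hf'a : deriv f a = 0) : f =O[𝓝 a] fun x => (x - a) ^ 2 := by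
  obtain ⟨K, U, hU, hK⟩ := (hf.deriv' (n := 1)).contDiffAt.exists_lipschitzOnWith (x := a)
  obtain ⟨δ, hδ, hball⟩ := Metric.mem_nhds_iff.1 hU
  refine .of_bound K (eventually_of_mem (Metric.ball_mem_nhds a hδ) fun x hx => ?_)
  -- `f'` is `K`-Lipschitz near `a` and vanishes at `a`, so `|f'| ≤ K |x - a|` between `a` and `x`.
  have hsub : Metric.closedBall a (dist x a) ⊆ U :=
    (Metric.closedBall_subset_ball hx).trans hball
  have hderiv : ∀ y ∈ Metric.closedBall a (dist x a), ‖deriv f y‖ ≤ K * dist x a := by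
    intro y hy
    have := hK.dist_le_mul y (hsub hy) a (hsub (Metric.mem_closedBall_self dist_nonneg))
    rw [hf'a, dist_zero_right] at this
    exact this.trans (by gcongr; exact hy)
  have := (convex_closedBall a _).norm_image_sub_le_of_norm_deriv_le
    (fun y _ => hf.differentiable (by norm_num) y) hderiv
    (Metric.mem_closedBall_self dist_nonneg) (Metric.mem_closedBall.2 le_rfl)
  rw [hfa, sub_zero, Real.dist_eq] at this
  rw [norm_pow, Real.norm_eq_abs, sq, ← mul_assoc]
  exact this

theorem tendsto_integral_nhdsLT_atTop {h : ℝ → ℝ} {a b c : ℝ} (hab : a < b) (hc : 0 < c)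
    (hh : ContinuousOn h (Ico a b)) (hle : ∀ᶠ s in 𝓝[<] b, c * (b - s)⁻¹ ≤ h s) :
    Tendsto (fun x => ∫ s in a..x, h s) (𝓝[<] b) atTop := by
  obtain ⟨x₀, hx₀b : x₀ < b, hx₀⟩ :=
    mem_nhdsLT_iff_exists_Ico_subset.1 (hle.and (Ioo_mem_nhdsLT hab))
  have hax₀ : a < x₀ := (hx₀ ⟨le_rfl, hx₀b⟩).2.1
  have hint : ∀ x ∈ Ico a b, ∀ y ∈ Ico a b, IntervalIntegrable h volume x y := fun x hx y hy =>
    (hh.mono (ordConnected_Ico.uIcc_subset hx hy)).intervalIntegrable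
  have hlog : Tendsto (fun x => log (b - x₀) - log (b - x)) (𝓝[<] b) atTop := by
    refine tendsto_atTop_add_const_left _ _ (tendsto_neg_atBot_atTop.comp
      (tendsto_log_nhdsGT_zero.comp (tendsto_nhdsWithin_iff.2 ⟨?_, ?_⟩)))
    · simpa using ((continuous_sub_left b).tendsto b).mono_left nhdsWithin_le_nhds
    · exact eventually_nhdsWithin_of_forall fun x (hx : x < b) => sub_pos.2 hx
  refine tendsto_atTop_mono' _ ?_ (tendsto_atTop_add_const_left _ (∫ s in a..x₀, h s)
    (hlog.const_mul_atTop hc))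
  filter_upwards [Ioo_mem_nhdsLT hx₀b] with x hx
  have hbx : 0 < b - x := sub_pos.2 hx.2
  have hcomp : ∫ s in x₀..x, c * (b - s)⁻¹ = c * (log (b - x₀) - log (b - x)) := by
    rw [intervalIntegral.integral_const_mul, intervalIntegral.integral_comp_sub_left
      (fun u => u⁻¹), integral_inv, log_div (by linarith) hbx.ne']
    rw [uIcc_of_le (by linarith [hx.1])]
    exact fun h0 => hbx.not_ge h0.1
  have hmono : ∫ s in x₀..x, c * (b - s)⁻¹ ≤ ∫ s in x₀..x, h s := by
    refine intervalIntegral.integral_mono_on hx.1.le ?_ (hint x₀ ⟨hax₀.le, hx₀b⟩ x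
      ⟨by linarith [hx.1], hx.2⟩) fun s hs => (hx₀ ⟨hs.1, hs.2.trans_lt hx.2⟩).1
    refine (continuousOn_const.mul
      (ContinuousOn.inv₀ (by fun_prop) fun s hs => ?_)).intervalIntegrable
    rw [uIcc_of_le hx.1.le] at hs
    linarith [hs.2]
  rw [← intervalIntegral.integral_add_adjacent_intervals (hint a ⟨le_rfl, hab⟩ x₀ ⟨hax₀.le, hx₀b⟩)
    (hint x₀ ⟨hax₀.le, hx₀b⟩ x ⟨by linarith [hx.1], hx.2⟩)]
  linarith

theorem exists_orderIso_Ioo_of_tendsto {T : ℝ → ℝ} {a b : ℝ} (hab : a < b)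
    (hT : ContinuousOn T (Ioo a b)) (hmono : StrictMonoOn T (Ioo a b))
    (hbot : Tendsto T (𝓝[>] a) atBot) (htop : Tendsto T (𝓝[<] b) atTop) :
    ∃ e : Ioo a b ≃o ℝ, ∀ x, e x = T x := by
  have hsurj : SurjOn T (Ioo a b) univ := hT.surjOn_of_tendsto (nonempty_Ioo.2 hab)
    ((tendsto_comp_coe_Ioo_atBot hab).2 hbot) ((tendsto_comp_coe_Ioo_atTop hab).2 htop)
  exact ⟨StrictMono.orderIsoOfSurjective _ (fun x y hxy => hmono x.2 y.2 hxy)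
    (surjOn_iff_surjective.1 hsurj), fun _ => rfl⟩

noncomputable def travelTime (W : ℝ → ℝ) (x : ℝ) : ℝ := ∫ s in (0 : ℝ)..x, (√(2 * W s))⁻¹

@[simp]
theorem travelTime_zero (W : ℝ → ℝ) : travelTime W 0 = 0 :=
  intervalIntegral.integral_same

theorem travelTime_comp_neg (W : ℝ → ℝ) (x : ℝ) :
    travelTime (fun s => W (-s)) x = -travelTime W (-x) := by
  rw [travelTime, intervalIntegral.integral_comp_neg (fun u => (√(2 * W u))⁻¹), neg_zero,
    intervalIntegral.integral_symm, travelTime]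

section TravelTime

variable {W : ℝ → ℝ}

theorem continuousOn_inv_sqrt (hW : Continuous W) (hWpos : ∀ s ∈ Ioo (-1 : ℝ) 1, 0 < W s) :
    ContinuousOn (fun s => (√(2 * W s))⁻¹) (Ioo (-1) 1) :=
  ContinuousOn.inv₀ (by fun_prop) fun s hs => (sqrt_pos.2 (by linarith [hWpos s hs])).ne'

theorem hasDerivAt_travelTime (hW : Continuous W) (hWpos : ∀ s ∈ Ioo (-1 : ℝ) 1, 0 < W s)
    {x : ℝ} (hx : x ∈ Ioo (-1 : ℝ) 1) : HasDerivAt (travelTime W) (√(2 * W x))⁻¹ x := by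
  have hcont := continuousOn_inv_sqrt hW hWpos
  have h0 : (0 : ℝ) ∈ Ioo (-1 : ℝ) 1 := by norm_num
  exact intervalIntegral.integral_hasDerivAt_right
    (hcont.mono (ordConnected_Ioo.uIcc_subset h0 hx)).intervalIntegrable
    (hcont.stronglyMeasurableAtFilter isOpen_Ioo _ hx) (hcont.continuousAt (isOpen_Ioo.mem_nhds hx))

theorem strictMonoOn_travelTime (hW : Continuous W) (hWpos : ∀ s ∈ Ioo (-1 : ℝ) 1, 0 < W s) :
    StrictMonoOn (travelTime W) (Ioo (-1) 1) := by
  refine strictMonoOn_of_hasDerivWithinAt_pos (convex_Ioo _ _)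
    (fun x hx => (hasDerivAt_travelTime hW hWpos hx).continuousAt.continuousWithinAt)
    (fun x hx => (hasDerivAt_travelTime hW hWpos (interior_subset hx)).hasDerivWithinAt)
    fun x hx => inv_pos.2 (sqrt_pos.2 (by linarith [hWpos x (interior_subset hx)]))

theorem tendsto_travelTime_nhdsLT_one (hW : ContDiff ℝ 2 W)
    (hWpos : ∀ s ∈ Ioo (-1 : ℝ) 1, 0 < W s) (hW1 : W 1 = 0) (hW1' : deriv W 1 = 0) :
    Tendsto (travelTime W) (𝓝[<] 1) atTop := by
  obtain ⟨C, hC⟩ := (isBigO_sub_sq_of_deriv_eq_zero hW hW1 hW1').bound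
  set K := √(2 * C) + 1
  have hK : 0 < K := by positivity
  refine tendsto_integral_nhdsLT_atTop (by norm_num) (inv_pos.2 hK)
    ((continuousOn_inv_sqrt hW.continuous hWpos).mono fun s hs => ⟨by linarith [hs.1], hs.2⟩) ?_
  filter_upwards [nhdsWithin_le_nhds hC, Ioo_mem_nhdsLT (show (-1 : ℝ) < 1 by norm_num)]
    with s hs hs'
  have h1s : 0 < 1 - s := sub_pos.2 hs'.2
  rw [← mul_inv]
  refine inv_anti₀ (sqrt_pos.2 (by linarith [hWpos s hs'])) ?_
  rw [Real.norm_eq_abs, norm_pow, Real.norm_eq_abs, sq_abs, abs_le] at hs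
  calc √(2 * W s) ≤ √(2 * C * (1 - s) ^ 2) := sqrt_le_sqrt (by nlinarith [hs.2])
    _ = √(2 * C) * (1 - s) := by rw [sqrt_mul' _ (by positivity), sqrt_sq h1s.le]
    _ ≤ K * (1 - s) := by gcongr; linarith

theorem tendsto_travelTime_nhdsGT_neg_one (hW : ContDiff ℝ 2 W)
    (hWpos : ∀ s ∈ Ioo (-1 : ℝ) 1, 0 < W s) (hWm1 : W (-1) = 0) (hWm1' : deriv W (-1) = 0) :
    Tendsto (travelTime W) (𝓝[>] (-1)) atBot := by
  have hreflect := tendsto_travelTime_nhdsLT_one (W := fun s => W (-s)) (hW.comp contDiff_neg)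
    (fun s hs => hWpos (-s) ⟨by linarith [hs.2], by linarith [hs.1]⟩) hWm1
    (by rw [deriv_comp_neg, hWm1', neg_zero])
  have htravel : travelTime W = fun x => -travelTime (fun s => W (-s)) (-x) := by
    funext x
    rw [travelTime_comp_neg, neg_neg, neg_neg]
  rw [htravel]
  exact tendsto_neg_atTop_atBot.comp (hreflect.comp tendsto_neg_nhdsGT_neg)

end TravelTime

theorem contDiff_two_iff_deriv {f : ℝ → ℝ} :
    ContDiff ℝ 2 f ↔ Differentiable ℝ f ∧ Differentiable ℝ (deriv f) ∧
      Continuous (deriv (deriv f)) := by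
  rw [show (2 : WithTop ℕ∞) = 1 + 1 from rfl, contDiff_succ_iff_deriv, contDiff_one_iff_deriv]
  simp

theorem exists_tendsto_deriv_comp_zero {g : ℝ → ℝ} {L : ℝ} (hg : Differentiable ℝ g)
    (hlim : Tendsto g atTop (𝓝 L)) :
    ∃ ξ : ℝ → ℝ, Tendsto ξ atTop atTop ∧ Tendsto (fun t => deriv g (ξ t)) atTop (𝓝 0) := by
  choose ξ hξ hslope using fun t : ℝ =>
    exists_deriv_eq_slope g (lt_add_one t) hg.continuous.continuousOn hg.differentiableOn
  refine ⟨ξ, tendsto_atTop_mono (fun t => (hξ t).1.le) tendsto_id, ?_⟩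
  simp_rw [hslope, add_sub_cancel_left, div_one]
  simpa using (hlim.comp (tendsto_atTop_add_const_right _ 1 tendsto_id)).sub hlim

theorem sq_deriv_sub_eq_of_ode {W g : ℝ → ℝ} (hW : Differentiable ℝ W) (hg : ContDiff ℝ 2 g)
    (hode : ∀ t, deriv (deriv g) t = deriv W (g t)) (t s : ℝ) :
    deriv g t ^ 2 - 2 * W (g t) = deriv g s ^ 2 - 2 * W (g s) := by
  obtain ⟨hg₁, hg₂, -⟩ := contDiff_two_iff_deriv.1 hg
  have henergy : ∀ t, HasDerivAt (fun t => deriv g t ^ 2 - 2 * W (g t)) 0 t := fun t => by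
    refine (((hg₂ t).hasDerivAt.pow 2).sub (((hW (g t)).hasDerivAt.comp t
      (hg₁ t).hasDerivAt).const_mul 2)).congr_deriv ?_
    rw [hode]
    ring
  exact is_const_of_deriv_eq_zero (fun t => (henergy t).differentiableAt)
    (fun t => (henergy t).deriv) t s

theorem eq_of_hits_equilibrium {F g : ℝ → ℝ} {a t₀ : ℝ} (hF : ContDiff ℝ 1 F)
    (hg : ContDiff ℝ 2 g) (hode : ∀ t, deriv (deriv g) t = F (g t)) (hFa : F a = 0)
    (hgt₀ : g t₀ = a) (hg't₀ : deriv g t₀ = 0) (t : ℝ) : g t = a := by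
  obtain ⟨hg₁, hg₂, -⟩ := contDiff_two_iff_deriv.1 hg
  -- `γ = (g, g')` solves `γ' = v γ` with `v` locally Lipschitz, so by local uniqueness the set of
  -- times at which `γ` sits at the rest point `(a, 0)` is open as well as closed.
  set v : ℝ × ℝ → ℝ × ℝ := fun p => (p.2, F p.1)
  set γ : ℝ → ℝ × ℝ := fun t => (g t, deriv g t)
  have hγ : ∀ t, HasDerivAt γ (v (γ t)) t := fun t => by
    simpa [v, γ, hode t] using (hg₁ t).hasDerivAt.prodMk (hg₂ t).hasDerivAt
  have hrest : ∀ t, HasDerivAt (fun _ => ((a, 0) : ℝ × ℝ)) (v (a, 0)) t := fun t => by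
    rw [show v (a, 0) = 0 by simp [v, hFa]]
    exact hasDerivAt_const (𝕜 := ℝ) t _
  have hclosed : IsClosed {t | γ t = (a, 0)} :=
    isClosed_eq (hg₁.continuous.prodMk hg₂.continuous) continuous_const
  have hopen : IsOpen {t | γ t = (a, 0)} := by
    refine isOpen_iff_mem_nhds.2 fun s hs => ?_
    have hv : ContDiff ℝ 1 v := contDiff_snd.prodMk (hF.comp contDiff_fst)
    obtain ⟨K, U, hU, hK⟩ := (hv.contDiffAt (x := (a, 0))).exists_lipschitzOnWith
    have hγU : ∀ᶠ t in 𝓝 s, γ t ∈ U :=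
      (hγ s).continuousAt.eventually_mem (by rwa [show γ s = (a, 0) from hs])
    exact ODE_solution_unique_of_eventually (v := fun _ => v) (s := fun _ => U)
      (.of_forall fun _ => hK) (hγU.mono fun t ht => ⟨hγ t, ht⟩)
      (.of_forall fun t => ⟨hrest t, mem_of_mem_nhds hU⟩) hs
  have huniv := IsClopen.eq_univ ⟨hclosed, hopen⟩ ⟨t₀, by simp [γ, hgt₀, hg't₀]⟩
  exact congrArg Prod.fst (huniv.symm ▸ mem_univ t : t ∈ {t | γ t = (a, 0)})

theorem hasDerivAt_sqrt_two_mul_comp {W g : ℝ → ℝ} {t : ℝ} (hW : DifferentiableAt ℝ W (g t))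
    (hpos : 0 < W (g t)) (hg : HasDerivAt g (√(2 * W (g t))) t) :
    HasDerivAt (fun s => √(2 * W (g s))) (deriv W (g t)) t := by
  refine (((hW.hasDerivAt.comp t hg).const_mul 2).sqrt (by positivity)).congr_deriv ?_
  simp only [Function.comp_apply]
  field_simp

def IsHeteroclinic (W g : ℝ → ℝ) : Prop :=
  ContDiff ℝ 2 g ∧ g 0 = 0 ∧ (∀ t, deriv (deriv g) t = deriv W (g t)) ∧
    Tendsto g atTop (𝓝 1) ∧ Tendsto g atBot (𝓝 (-1))

namespace IsHeteroclinic

variable {W g : ℝ → ℝ}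

theorem sq_deriv_eq (hg : IsHeteroclinic W g) (hW : ContDiff ℝ 2 W) (hW1 : W 1 = 0) (t : ℝ) :
    deriv g t ^ 2 = 2 * W (g t) := by
  obtain ⟨hgC2, -, hode, htop, -⟩ := hg
  have hWd : Differentiable ℝ W := hW.differentiable (by norm_num)
  set e := deriv g t ^ 2 - 2 * W (g t)
  obtain ⟨ξ, hξ, hderiv⟩ :=
    exists_tendsto_deriv_comp_zero (hgC2.differentiable (by norm_num)) htop
  have hlim : Tendsto (fun s => deriv g (ξ s) ^ 2) atTop (𝓝 (e + 2 * W 1)) := by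
    refine ((((hWd.continuous.tendsto 1).comp (htop.comp hξ)).const_mul 2).const_add e).congr
      fun s => ?_
    simp only [Function.comp_apply, e, sq_deriv_sub_eq_of_ode hWd hgC2 hode t (ξ s)]
    ring
  rw [hW1, mul_zero, add_zero] at hlim
  have he : e = 0 := tendsto_nhds_unique hlim (by simpa using hderiv.pow 2)
  simp only [e] at he
  linarith

theorem mem_Ioo (hg : IsHeteroclinic W g) (hW : ContDiff ℝ 2 W) (hWm1 : W (-1) = 0)
    (hWp1 : W 1 = 0) (hWm1' : deriv W (-1) = 0) (hWp1' : deriv W 1 = 0) (t : ℝ) :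
    g t ∈ Ioo (-1 : ℝ) 1 := by
  have ⟨hgC2, hg0, hode, _, _⟩ := hg
  have hW' : ContDiff ℝ 1 (deriv W) := hW.deriv' (n := 1)
  have havoid : ∀ a, W a = 0 → deriv W a = 0 → a ≠ 0 → a ∉ range g := by
    rintro a hWa hW'a ha ⟨s, hs⟩
    have hg's : deriv g s = 0 := by
      simpa [hs, hWa] using hg.sq_deriv_eq hW hWp1 s
    exact ha ((eq_of_hits_equilibrium hW' hgC2 hode hW'a hs hg's 0).symm.trans hg0)
  constructor
  · by_contra! h
    exact havoid (-1) hWm1 hWm1' (by norm_num) (mem_range_of_exists_le_of_exists_ge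
      hgC2.continuous ⟨t, h⟩ ⟨0, by rw [hg0]; norm_num⟩)
  · by_contra! h
    exact havoid 1 hWp1 hWp1' one_ne_zero (mem_range_of_exists_le_of_exists_ge
      hgC2.continuous ⟨0, by rw [hg0]; norm_num⟩ ⟨t, h⟩)

theorem deriv_pos (hg : IsHeteroclinic W g) (hW : ContDiff ℝ 2 W)
    (hWpos : ∀ s ∈ Ioo (-1 : ℝ) 1, 0 < W s) (hWm1 : W (-1) = 0) (hWp1 : W 1 = 0)
    (hWm1' : deriv W (-1) = 0) (hWp1' : deriv W 1 = 0) (t : ℝ) : 0 < deriv g t := by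
  have ⟨hgC2, hg0, _, htop, _⟩ := hg
  obtain ⟨hg₁, hg₂, -⟩ := contDiff_two_iff_deriv.1 hgC2
  have hne : ∀ s, deriv g s ≠ 0 := fun s h0 => by
    have := hg.sq_deriv_eq hW hWp1 s
    rw [h0] at this
    linarith [hWpos _ (hg.mem_Ioo hW hWm1 hWp1 hWm1' hWp1' s)]
  by_contra! hneg
  have hneg' : ∀ s, deriv g s ≤ 0 := fun s => by
    by_contra! hs
    obtain ⟨r, hr⟩ := mem_range_of_exists_le_of_exists_ge hg₂.continuous ⟨t, hneg⟩ ⟨s, hs.le⟩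
    exact hne r hr
  have hanti := antitone_of_deriv_nonpos hg₁ hneg'
  have : (1 : ℝ) ≤ 0 := le_of_tendsto htop (eventually_atTop.2 ⟨0, fun s hs => hg0 ▸ hanti hs⟩)
  norm_num at this

theorem deriv_eq_sqrt (hg : IsHeteroclinic W g) (hW : ContDiff ℝ 2 W)
    (hWpos : ∀ s ∈ Ioo (-1 : ℝ) 1, 0 < W s) (hWm1 : W (-1) = 0) (hWp1 : W 1 = 0)
    (hWm1' : deriv W (-1) = 0) (hWp1' : deriv W 1 = 0) (t : ℝ) :
    deriv g t = √(2 * W (g t)) := by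
  rw [← hg.sq_deriv_eq hW hWp1, sqrt_sq (hg.deriv_pos hW hWpos hWm1 hWp1 hWm1' hWp1' t).le]

theorem travelTime_eq (hg : IsHeteroclinic W g) (hW : ContDiff ℝ 2 W)
    (hWpos : ∀ s ∈ Ioo (-1 : ℝ) 1, 0 < W s) (hWm1 : W (-1) = 0) (hWp1 : W 1 = 0)
    (hWm1' : deriv W (-1) = 0) (hWp1' : deriv W 1 = 0) (t : ℝ) : travelTime W (g t) = t := by
  have ⟨hgC2, hg0, _, _, _⟩ := hg
  have hderiv : ∀ t, HasDerivAt (fun t => travelTime W (g t) - t) 0 t := fun t => by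
    refine ((hasDerivAt_travelTime hW.continuous hWpos
      (hg.mem_Ioo hW hWm1 hWp1 hWm1' hWp1' t)).comp t
      ((hgC2.differentiable (by norm_num) t).hasDerivAt)).sub (hasDerivAt_id t) |>.congr_deriv ?_
    rw [hg.deriv_eq_sqrt hW hWpos hWm1 hWp1 hWm1' hWp1' t, inv_mul_cancel₀
      (sqrt_pos.2 (by linarith [hWpos _ (hg.mem_Ioo hW hWm1 hWp1 hWm1' hWp1' t)])).ne', sub_self]
  have := is_const_of_deriv_eq_zero (fun t => (hderiv t).differentiableAt)
    (fun t => (hderiv t).deriv) t 0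
  rw [hg0, travelTime_zero] at this
  linarith

end IsHeteroclinic

theorem exists_isHeteroclinic {W : ℝ → ℝ} (hW : ContDiff ℝ 2 W)
    (hWpos : ∀ s ∈ Ioo (-1 : ℝ) 1, 0 < W s) (hWm1 : W (-1) = 0) (hWp1 : W 1 = 0)
    (hWm1' : deriv W (-1) = 0) (hWp1' : deriv W 1 = 0) : ∃ g, IsHeteroclinic W g := by
  have hWd : Differentiable ℝ W := hW.differentiable (by norm_num)
  have hmono := strictMonoOn_travelTime hW.continuous hWpos
  obtain ⟨e, he⟩ := exists_orderIso_Ioo_of_tendsto (by norm_num)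
    (fun x hx => (hasDerivAt_travelTime hW.continuous hWpos hx).continuousAt.continuousWithinAt)
    hmono (tendsto_travelTime_nhdsGT_neg_one hW hWpos hWm1 hWm1')
    (tendsto_travelTime_nhdsLT_one hW hWpos hWp1 hWp1')
  set g : ℝ → ℝ := fun t => e.symm t
  have hmem : ∀ t, g t ∈ Ioo (-1 : ℝ) 1 := fun t => (e.symm t).2
  have hWg : ∀ t, 0 < W (g t) := fun t => hWpos _ (hmem t)
  have hTg : ∀ t, travelTime W (g t) = t := fun t => by rw [← he, e.apply_symm_apply]
  have hg' : ∀ t, HasDerivAt g (√(2 * W (g t))) t := fun t => by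
    rw [← inv_inv √(2 * W (g t))]
    exact (hasDerivAt_travelTime hW.continuous hWpos (hmem t)).of_local_left_inverse
      (continuous_subtype_val.comp e.symm.continuous).continuousAt
      (inv_ne_zero (sqrt_pos.2 (by linarith [hWg t])).ne') (.of_forall hTg)
  have hderiv : deriv g = fun t => √(2 * W (g t)) := funext fun t => (hg' t).deriv
  have hg'' : ∀ t, HasDerivAt (deriv g) (deriv W (g t)) t := fun t => by
    rw [hderiv]
    exact hasDerivAt_sqrt_two_mul_comp (hWd _) (hWg t) (hg' t)
  refine ⟨g, contDiff_two_iff_deriv.2 ⟨fun t => (hg' t).differentiableAt,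
    fun t => (hg'' t).differentiableAt, ?_⟩, ?_, fun t => (hg'' t).deriv, ?_, ?_⟩
  · rw [funext fun t => (hg'' t).deriv]
    exact (hW.continuous_deriv (by norm_num)).comp (continuous_iff_continuousAt.2 fun t =>
      (hg' t).continuousAt)
  · exact hmono.injOn (hmem 0) (by norm_num) (by rw [hTg, travelTime_zero])
  · exact ((tendsto_Ioo_atTop (.of_dense _)).1 e.symm.tendsto_atTop).mono_right nhdsWithin_le_nhds
  · exact ((tendsto_Ioo_atBot (.of_dense _)).1 e.symm.tendsto_atBot).mono_right nhdsWithin_le_nhds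

theorem stmt_0_general (W : ℝ → ℝ) (hW : ContDiff ℝ 2 W)
    (hWpos : ∀ s ∈ Set.Ioo (-1:ℝ) 1, 0 < W s)
    (hWm1 : W (-1) = 0) (hWp1 : W 1 = 0)
    (hWm1' : deriv W (-1) = 0) (hWp1' : deriv W 1 = 0) :
    (∃! g : ℝ → ℝ, ContDiff ℝ 2 g ∧ g 0 = 0 ∧
      (∀ t, deriv (deriv g) t = deriv W (g t)) ∧
      Filter.Tendsto g Filter.atTop (nhds 1) ∧
      Filter.Tendsto g Filter.atBot (nhds (-1))) ∧
    (∀ g : ℝ → ℝ, (ContDiff ℝ 2 g ∧ g 0 = 0 ∧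
      (∀ t, deriv (deriv g) t = deriv W (g t)) ∧
      Filter.Tendsto g Filter.atTop (nhds 1) ∧
      Filter.Tendsto g Filter.atBot (nhds (-1))) →
      ∀ t, deriv g t = Real.sqrt (2 * W (g t)) ∧ 0 < deriv g t) := by
  obtain ⟨g₀, hg₀⟩ := exists_isHeteroclinic hW hWpos hWm1 hWp1 hWm1' hWp1'
  have hunique : ∀ g, IsHeteroclinic W g → g = g₀ := fun g hg => funext fun t =>
    strictMonoOn_travelTime hW.continuous hWpos |>.injOn
      (hg.mem_Ioo hW hWm1 hWp1 hWm1' hWp1' t) (hg₀.mem_Ioo hW hWm1 hWp1 hWm1' hWp1' t)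
      (by rw [hg.travelTime_eq hW hWpos hWm1 hWp1 hWm1' hWp1',
        hg₀.travelTime_eq hW hWpos hWm1 hWp1 hWm1' hWp1'])
  exact ⟨⟨g₀, hg₀, hunique⟩, fun g (hg : IsHeteroclinic W g) t =>
    ⟨hg.deriv_eq_sqrt hW hWpos hWm1 hWp1 hWm1' hWp1' t,
      hg.deriv_pos hW hWpos hWm1 hWp1 hWm1' hWp1' t⟩⟩

theorem stmt_0 (W : ℝ → ℝ) (hW : ContDiff ℝ 2 W)
    (hWpos : ∀ s ∈ Set.Ioo (-1:ℝ) 1, 0 < W s)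
    (hWm1 : W (-1) = 0) (hWp1 : W 1 = 0)
    (hWm1' : deriv W (-1) = 0) (hWp1' : deriv W 1 = 0)
    (hWm1'' : iteratedDeriv 2 W (-1) = 2) (hWp1'' : iteratedDeriv 2 W 1 = 2)
    (hW0 : deriv W 0 = 0)
    (hWuniq : ∀ s ∈ Set.Ioo (-1:ℝ) 1, deriv W s = 0 → s = 0) :
    (∃! g : ℝ → ℝ, ContDiff ℝ 2 g ∧ g 0 = 0 ∧
      (∀ t, deriv (deriv g) t = deriv W (g t)) ∧
      Filter.Tendsto g Filter.atTop (nhds 1) ∧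
      Filter.Tendsto g Filter.atBot (nhds (-1))) ∧
    (∀ g : ℝ → ℝ, (ContDiff ℝ 2 g ∧ g 0 = 0 ∧
      (∀ t, deriv (deriv g) t = deriv W (g t)) ∧
      Filter.Tendsto g Filter.atTop (nhds 1) ∧
      Filter.Tendsto g Filter.atBot (nhds (-1))) →
      ∀ t, deriv g t = Real.sqrt (2 * W (g t)) ∧ 0 < deriv g t) :=
  stmt_0_general W hW hWpos hWm1 hWp1 hWm1' hWp1'
end

section
/- Let Σ be a smooth properly embedded curve in ℝ², diffeomorphic to [0,∞), with arc-length parametrization X : [0,∞) → ℝ², such that |X''(t)| ≤ C |X(t)|^{−8/7} for all large t (where |X(t)| → ∞). Then there exists a constant c > 0 such that |X(t)| ≥ c t for all large t. -/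
/-!
Write `f(t) = |X(t)|²`. Since `|X'| = 1`, `f'' = 2 + 2⟪X, X''⟫`, and the curvature decay gives
`|⟪X, X''⟫| ≤ C |X|^{-1/7} → 0`, so `f'' ≥ 1` from some time `T` on. Integrating twice,
`f(t) ≥ f(T) + f'(T)(t - T) + (t - T)²/2`, which eventually exceeds `(t/4)²`.
-/

open Real Filter MeasureTheory Metric Set Topology
open scoped RealInnerProductSpace

theorem sub_le_sub_of_hasDerivAt_le {f g f' g' : ℝ → ℝ} {T t : ℝ}
    (hf : ∀ s ≥ T, HasDerivAt f (f' s) s) (hg : ∀ s ≥ T, HasDerivAt g (g' s) s)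
    (hle : ∀ s > T, f' s ≤ g' s) (ht : T ≤ t) : f t - f T ≤ g t - g T := by
  have hmono : MonotoneOn (fun s => g s - f s) (Ici T) := by
    refine monotoneOn_of_hasDerivWithinAt_nonneg (f' := fun s => g' s - f' s) (convex_Ici T)
      (fun s hs => ((hg s hs).sub (hf s hs)).continuousAt.continuousWithinAt) ?_ ?_
    · intro s hs
      rw [interior_Ici] at hs
      exact ((hg s hs.le).sub (hf s hs.le)).hasDerivWithinAt
    · intro s hs
      rw [interior_Ici] at hs
      exact sub_nonneg.2 (hle s hs)
  have := hmono (mem_Ici.2 le_rfl) ht ht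
  dsimp only at this
  linarith

theorem add_mul_add_sq_le_of_le_deriv2 {f f' f'' : ℝ → ℝ} {T a t : ℝ}
    (hf : ∀ s ≥ T, HasDerivAt f (f' s) s) (hf' : ∀ s ≥ T, HasDerivAt f' (f'' s) s)
    (ha : ∀ s > T, a ≤ f'' s) (ht : T ≤ t) :
    f T + f' T * (t - T) + a * (t - T) ^ 2 / 2 ≤ f t := by
  have hslope : ∀ s ≥ T, f' T + a * (s - T) ≤ f' s := fun s hs => by
    have := sub_le_sub_of_hasDerivAt_le (f := fun s => a * s) (f' := fun _ => a)
      (fun s _ => ((hasDerivAt_id s).const_mul a).congr_deriv (mul_one a)) hf' ha hs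
    linarith
  have hquad : ∀ s : ℝ, HasDerivAt (fun s => f' T * s + a * (s - T) ^ 2 / 2)
      (f' T + a * (s - T)) s := fun s => by
    have hsq : HasDerivAt (fun s => (s - T) ^ 2) (2 * (s - T)) s :=
      (((hasDerivAt_id' s).sub_const T).fun_pow 2).congr_deriv (by ring)
    exact (((hasDerivAt_id' s).const_mul (f' T)).add ((hsq.const_mul a).div_const 2)).congr_deriv
      (by ring)
  have := sub_le_sub_of_hasDerivAt_le (fun s _ => hquad s) hf (fun s hs => hslope s hs.le) ht
  linarith

theorem tendsto_inner_of_norm_le_mul_rpow {α E : Type*} [NormedAddCommGroup E]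
    [InnerProductSpace ℝ E] {l : Filter α} {x v : α → E} {C p : ℝ} (hp : 1 < p)
    (hx : Tendsto (‖x ·‖) l atTop) (hv : ∀ᶠ t in l, ‖v t‖ ≤ C * ‖x t‖ ^ (-p)) :
    Tendsto (fun t => ⟪x t, v t⟫) l (𝓝 0) := by
  have hlim : Tendsto (fun t => C * ‖x t‖ ^ (-(p - 1))) l (𝓝 0) := by
    simpa using ((tendsto_rpow_neg_atTop (sub_pos.2 hp)).comp hx).const_mul C
  refine squeeze_zero_norm' ?_ hlim
  filter_upwards [hv, hx.eventually_gt_atTop 0] with t hvt hxt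
  calc ‖⟪x t, v t⟫‖ ≤ ‖x t‖ * ‖v t‖ := norm_inner_le_norm _ _
    _ ≤ ‖x t‖ * (C * ‖x t‖ ^ (-p)) := by gcongr
    _ = C * ‖x t‖ ^ (-(p - 1)) := by
      rw [show -(p - 1) = 1 + -p by ring, rpow_add hxt, rpow_one]
      ring

theorem hasDerivAt_two_mul_inner_deriv {E : Type*} [NormedAddCommGroup E]
    [InnerProductSpace ℝ E] {X : ℝ → E} {t : ℝ} (h₁ : DifferentiableAt ℝ X t)
    (h₂ : DifferentiableAt ℝ (deriv X) t) :
    HasDerivAt (fun s => 2 * ⟪X s, deriv X s⟫)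
      (2 * ‖deriv X t‖ ^ 2 + 2 * ⟪X t, deriv (deriv X) t⟫) t := by
  refine ((h₁.hasDerivAt.inner ℝ h₂.hasDerivAt).const_mul 2).congr_deriv ?_
  rw [real_inner_self_eq_norm_sq]
  ring

theorem eventually_sq_le_sq_div_two_add_mul (T A : ℝ) :
    ∀ᶠ t in atTop, (t / 4) ^ 2 ≤ (t - T) ^ 2 / 2 + A * (t - T) := by
  filter_upwards [eventually_ge_atTop (2 * |T|), eventually_ge_atTop (8 * |A|)] with t hT hA
  have hhalf : t / 2 ≤ t - T := by linarith [le_abs_self T]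
  have hA' : |A| ≤ (t - T) / 4 := by linarith
  have hAu : -|A| * (t - T) ≤ A * (t - T) :=
    mul_le_mul_of_nonneg_right (neg_abs_le A) (by linarith [abs_nonneg T])
  have hsq : (t / 2) ^ 2 ≤ (t - T) ^ 2 :=
    pow_le_pow_left₀ (by linarith [abs_nonneg T]) hhalf 2
  nlinarith [mul_le_mul_of_nonneg_right hA' (by linarith [abs_nonneg A] : 0 ≤ t - T)]

theorem stmt_13_general (X : ℝ → EuclideanSpace ℝ (Fin 2)) (hX : ContDiff ℝ 2 X)
    (harc : ∀ t : ℝ, 0 ≤ t → ‖deriv X t‖ = 1)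
    (hinf : Filter.Tendsto (fun t => ‖X t‖) Filter.atTop Filter.atTop)
    (C : ℝ) (T₀ : ℝ)
    (hcurv : ∀ t ≥ T₀, ‖deriv (deriv X) t‖ ≤ C * ‖X t‖ ^ (-(8:ℝ)/7)) :
    ∃ c > (0:ℝ), ∃ T₁ : ℝ, ∀ t ≥ T₁, c * t ≤ ‖X t‖ := by
  have hd₁ : Differentiable ℝ X := hX.differentiable (by norm_num)
  have hd₂ : Differentiable ℝ (deriv X) := hX.differentiable_deriv_two
  have hinner : ∀ᶠ t in atTop, -(1 / 2) < ⟪X t, deriv (deriv X) t⟫ :=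
    (tendsto_inner_of_norm_le_mul_rpow (p := 8 / 7) (by norm_num) hinf
      (eventually_atTop.2 ⟨T₀, fun t ht => by rw [← neg_div]; exact hcurv t ht⟩)).eventually
      (lt_mem_nhds (by norm_num))
  obtain ⟨T, hT⟩ := eventually_atTop.1 (hinner.and (eventually_ge_atTop 0))
  have hquad : ∀ t ≥ T, ‖X T‖ ^ 2 + 2 * ⟪X T, deriv X T⟫ * (t - T) + 1 * (t - T) ^ 2 / 2
      ≤ ‖X t‖ ^ 2 :=
    fun t => add_mul_add_sq_le_of_le_deriv2 (fun s _ => (hd₁ s).hasDerivAt.norm_sq)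
      (fun s _ => hasDerivAt_two_mul_inner_deriv (hd₁ s) (hd₂ s))
      (fun s hs => by rw [harc s (hT s hs.le).2]; linarith [(hT s hs.le).1])
  obtain ⟨T₁, hT₁⟩ := eventually_atTop.1
    ((eventually_sq_le_sq_div_two_add_mul T (2 * ⟪X T, deriv X T⟫)).and
      (eventually_ge_atTop (max T 0)))
  refine ⟨1 / 4, by norm_num, T₁, fun t ht => ?_⟩
  obtain ⟨hsq, htT⟩ := hT₁ t ht
  have h : (t / 4) ^ 2 ≤ ‖X t‖ ^ 2 := by
    linarith [hquad t (le_of_max_le_left htT), sq_nonneg ‖X T‖]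
  rw [one_div_mul_eq_div]
  exact (pow_le_pow_iff_left₀ (by linarith [le_of_max_le_right htT]) (norm_nonneg _)
    two_ne_zero).1 h

theorem stmt_13 (X : ℝ → EuclideanSpace ℝ (Fin 2)) (hX : ContDiff ℝ 2 X)
    (harc : ∀ t : ℝ, 0 ≤ t → ‖deriv X t‖ = 1)
    (hinf : Filter.Tendsto (fun t => ‖X t‖) Filter.atTop Filter.atTop)
    (C : ℝ) (hC : 0 < C) (T₀ : ℝ)
    (hcurv : ∀ t ≥ T₀, ‖deriv (deriv X) t‖ ≤ C * ‖X t‖ ^ (-(8:ℝ)/7)) :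
    ∃ c > (0:ℝ), ∃ T₁ : ℝ, ∀ t ≥ T₁, c * t ≤ ‖X t‖ :=
  stmt_13_general X hX harc hinf C T₀ hcurv
end

section
/- Let u solve εΔu = ε^{−1}W'(u) in a ball B where u > 1 − b (for small b > 0, so that W''(u) ∈ (2−δ(b), 2+δ(b)) there). Suppose ψ ≥ 0 satisfies Δψ ≤ ((2+δ)/ε²) ψ in the rectangle Ω = {|x₁| < Lε, Lε < x₂ < ρ − Lε} ⊂ B and ψ ≥ c/ε on the bottom boundary {x₂ = Lε, |x₁| < Lε}. Then there is a constant c' > 0 (depending on L, δ, c) such that ψ(x₁, x₂) ≥ (c'/ε) exp(−√(2 + δ + C/L²) · (x₂ − Lε)/ε) for all (x₁, x₂) with |x₁| < Lε/2 and ρ/4 < x₂ < 3ρ/4, provided ε ≪ ρ ≤ ε|log ε|. -/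
/-!
Take `a = Lε`, `h = ρ - a`, `Ω = (-a, a) × (a, h)`, `κ = (2 + δ)/ε²` and `μ² = κ + (π/2a)²`,
and compare `ψ` with the barrier `φ(x) = A cos(πx₁/2a) (e^{-μ(x₂-a)} - e^{-μ(h-a)})`,
`A = c/ε`. The cosine is the first Dirichlet eigenfunction of `(-a, a)`, with eigenvalue
`(π/2a)² = C/(Lε)²` for `C = π²/4`; hence `Δφ = κφ + μ² A cos(πx₁/2a) e^{-μ(h-a)} ≥ κφ` in `Ω`.
Moreover `φ` vanishes on the sides and the top of `Ω` and is at most `A ≤ ψ` on the bottom.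

At a minimum point of `ψ - φ` on the closed rectangle, either the point lies on the boundary,
or the second order conditions give `κφ ≤ Δφ ≤ Δψ ≤ κψ`; either way `ψ ≥ φ` there, hence
everywhere. For `|x₁| < a/2` the cosine is at least `1/2`, and for `x₂ < 3ρ/4` one has
`μ(h - x₂) ≥ 1`, so the correction `e^{-μ(h-a)}` is at most half of `e^{-μ(x₂-a)}`; this gives
the bound with `c' = c/4`.
-/

open Real Filter MeasureTheory Metric Set Topology

noncomputable section

/-- The Laplacian on `ℝ × ℝ`. -/
def lapP (ψ : ℝ × ℝ → ℝ) (x : ℝ × ℝ) : ℝ :=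
  iteratedFDeriv ℝ 2 ψ x (fun _ => ((1:ℝ), (0:ℝ))) +
  iteratedFDeriv ℝ 2 ψ x (fun _ => ((0:ℝ), (1:ℝ)))

/-- The open rectangle `Ω = {|x₁| < Lε, Lε < x₂ < ρ − Lε}`. -/
def rect (ε ρ L : ℝ) : Set (ℝ × ℝ) :=
  {p : ℝ × ℝ | |p.1| < L * ε ∧ L * ε < p.2 ∧ p.2 < ρ - L * ε}

theorem IsLocalMin.nonneg_of_hasDerivAt_of_hasDerivAt {g g' : ℝ → ℝ} {x q : ℝ}
    (h : IsLocalMin g x) (hg : ∀ᶠ t in 𝓝 x, HasDerivAt g (g' t) t)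
    (hg' : HasDerivAt g' q x) : 0 ≤ q := by
  by_contra! hq
  have hderiv : deriv g =ᶠ[𝓝 x] g' := hg.mono fun t ht => ht.deriv
  have hmax : IsLocalMax g x := by
    refine isLocalMax_of_sign_deriv hg.self_of_nhds.continuousAt (nhdsWithin_le_nhds ?_)
    refine eventually_nhdsWithin_sign_eq_of_deriv_neg ?_ ?_
    · rwa [hderiv.deriv_eq, hg'.deriv]
    · rw [hderiv.eq_of_nhds]
      exact h.hasDerivAt_eq_zero hg.self_of_nhds
  -- a local minimum that is also a local maximum: `g` is locally constant
  have hconst : g =ᶠ[𝓝 x] fun _ => g x :=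
    (h.and hmax).mono fun t ht => le_antisymm ht.2 ht.1
  have hzero : g' =ᶠ[𝓝 x] fun _ => 0 := by
    refine hderiv.symm.trans (hconst.deriv.trans ?_)
    simp only [deriv_const']
    rfl
  exact hq.ne ((hg'.congr_of_eventuallyEq hzero.symm).unique (hasDerivAt_const x 0))

theorem ContDiffAt.le_fderiv_fderiv_of_isLocalMin_sub {E : Type*} [NormedAddCommGroup E]
    [NormedSpace ℝ E] {ψ : E → ℝ} {p : E} (hψ : ContDiffAt ℝ 2 ψ p) (v : E)
    {b b' : ℝ → ℝ} {q : ℝ} (hb : ∀ᶠ t in 𝓝 0, HasDerivAt b (b' t) t) (hb' : HasDerivAt b' q 0)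
    (hmin : IsLocalMin (fun t : ℝ => ψ (p + t • v) - b t) 0) :
    q ≤ fderiv ℝ (fderiv ℝ ψ) p v v := by
  have hline : ∀ t : ℝ, HasDerivAt (fun t : ℝ => p + t • v) v t := fun t => by
    simpa using ((hasDerivAt_id t).smul_const v).const_add p
  have hline0 : Tendsto (fun t : ℝ => p + t • v) (𝓝 0) (𝓝 p) := by
    simpa using (hline 0).continuousAt.tendsto
  have hd1 : ∀ᶠ t in 𝓝 (0:ℝ),
      HasDerivAt (fun t => ψ (p + t • v)) (fderiv ℝ ψ (p + t • v) v) t := by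
    filter_upwards [hline0.eventually (hψ.eventually (by simp))] with t ht
    exact (ht.differentiableAt two_ne_zero).hasFDerivAt.comp_hasDerivAt t (hline t)
  have hd2 : HasDerivAt (fun t : ℝ => fderiv ℝ ψ (p + t • v) v)
      (fderiv ℝ (fderiv ℝ ψ) p v v) 0 := by
    have hF : HasFDerivAt (fderiv ℝ ψ) (fderiv ℝ (fderiv ℝ ψ) p) p :=
      ((hψ.fderiv_right (m := 1) (by norm_num)).differentiableAt (by norm_num)).hasFDerivAt
    simpa using ((hF.comp_hasDerivAt_of_eq 0 (hline 0) (by simp)).clm_apply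
      (hasDerivAt_const 0 v))
  have hnonneg := hmin.nonneg_of_hasDerivAt_of_hasDerivAt
    (hd1.and hb |>.mono fun t ht => ht.1.sub ht.2) (hd2.sub hb')
  linarith

theorem ContDiffAt.add_le_lapP_of_isLocalMin_sub {ψ : ℝ × ℝ → ℝ} {p : ℝ × ℝ}
    (hψ : ContDiffAt ℝ 2 ψ p) {f f' f'' g g' g'' : ℝ → ℝ}
    (hf : ∀ t, HasDerivAt f (f' t) t) (hf' : ∀ t, HasDerivAt f' (f'' t) t)
    (hg : ∀ t, HasDerivAt g (g' t) t) (hg' : ∀ t, HasDerivAt g' (g'' t) t)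
    (hmin : IsLocalMin (fun x => ψ x - f x.1 * g x.2) p) :
    f'' p.1 * g p.2 + f p.1 * g'' p.2 ≤ lapP ψ p := by
  have hline : ∀ v : ℝ × ℝ,
      IsLocalMin (fun t : ℝ => ψ (p + t • v) - f (p + t • v).1 * g (p + t • v).2) 0 :=
    fun v => IsLocalMin.comp_continuous (f := fun x => ψ x - f x.1 * g x.2)
      (g := fun t : ℝ => p + t • v) (b := 0) (by simpa using hmin) (by fun_prop)
  have hshift : ∀ s t : ℝ, HasDerivAt (fun t => s + t) 1 t := fun s t =>
    (hasDerivAt_id t).const_add s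
  rw [lapP, iteratedFDeriv_two_apply, iteratedFDeriv_two_apply]
  refine add_le_add ?_ ?_
  · refine hψ.le_fderiv_fderiv_of_isLocalMin_sub (1, 0)
      (b := fun t => f (p.1 + t) * g p.2) (b' := fun t => f' (p.1 + t) * g p.2)
      (.of_forall fun t => ?_) ?_ (by simpa using hline (1, 0))
    · simpa using ((hf _).comp t (hshift p.1 t)).mul_const (g p.2)
    · simpa using ((hf' _).comp 0 (hshift p.1 0)).mul_const (g p.2)
  · refine hψ.le_fderiv_fderiv_of_isLocalMin_sub (0, 1)
      (b := fun t => f p.1 * g (p.2 + t)) (b' := fun t => f p.1 * g' (p.2 + t))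
      (.of_forall fun t => ?_) ?_ (by simpa using hline (0, 1))
    · simpa using ((hg _).comp t (hshift p.2 t)).const_mul (f p.1)
    · simpa using ((hg' _).comp 0 (hshift p.2 0)).const_mul (f p.1)

theorem le_on_closure_of_le_at_minima {X : Type*} [TopologicalSpace X] {Ω : Set X}
    (hΩ : IsOpen Ω) (hK : IsCompact (closure Ω)) {φ ψ : X → ℝ}
    (hφ : ContinuousOn φ (closure Ω)) (hψ : ContinuousOn ψ (closure Ω))
    (hbdry : ∀ p ∈ closure Ω, p ∉ Ω → φ p ≤ ψ p)
    (hint : ∀ p ∈ Ω, IsLocalMin (fun x => ψ x - φ x) p → φ p ≤ ψ p)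
    {x : X} (hx : x ∈ closure Ω) : φ x ≤ ψ x := by
  obtain ⟨p, hpK, hpmin⟩ := hK.exists_isMinOn ⟨x, hx⟩ (hψ.sub hφ)
  have hp : φ p ≤ ψ p := by
    by_cases hpΩ : p ∈ Ω
    · exact hint p hpΩ (hpmin.isLocalMin (mem_of_superset (hΩ.mem_nhds hpΩ) subset_closure))
    · exact hbdry p hpK hpΩ
  have := isMinOn_iff.1 hpmin x hx
  simp only [Pi.sub_apply] at this
  linarith

def cosExpBarrier (A a h μ : ℝ) (x : ℝ × ℝ) : ℝ :=
  A * cos (π / (2 * a) * x.1) * (exp (-(μ * (x.2 - a))) - exp (-(μ * (h - a))))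

section CosExpBarrier

variable {A a h μ : ℝ}

theorem cos_pi_div_two_mul_nonneg_of_abs_le (ha : 0 < a) {s : ℝ} (hs : |s| ≤ a) :
    0 ≤ cos (π / (2 * a) * s) := by
  have : |π / (2 * a) * s| ≤ π / 2 :=
    calc |π / (2 * a) * s| = π / (2 * a) * |s| := by rw [abs_mul, abs_of_pos (by positivity)]
      _ ≤ π / (2 * a) * a := by gcongr
      _ = π / 2 := by field_simp
  exact cos_nonneg_of_mem_Icc (abs_le.1 this)

theorem cosExpBarrier_eq_zero_of_abs_eq (ha : 0 < a) {x : ℝ × ℝ} (hx : |x.1| = a) :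
    cosExpBarrier A a h μ x = 0 := by
  have : cos (π / (2 * a) * x.1) = 0 := by
    rw [← cos_abs, abs_mul, abs_of_pos (by positivity : 0 < π / (2 * a)), hx,
      show π / (2 * a) * a = π / 2 by field_simp, cos_pi_div_two]
  simp [cosExpBarrier, this]

theorem cosExpBarrier_top_eq_zero (s : ℝ) : cosExpBarrier A a h μ (s, h) = 0 := by
  simp [cosExpBarrier]

theorem cosExpBarrier_bottom_le (ha : 0 < a) (hA : 0 ≤ A) {s : ℝ} (hs : |s| ≤ a) :
    cosExpBarrier A a h μ (s, a) ≤ A := by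
  have hc0 := mul_nonneg hA (cos_pi_div_two_mul_nonneg_of_abs_le ha hs)
  have hc1 := cos_le_one (π / (2 * a) * s)
  have hE := exp_pos (-(μ * (h - a)))
  simp only [cosExpBarrier, sub_self, mul_zero, neg_zero, exp_zero]
  nlinarith

theorem mul_cosExpBarrier_le_lapP_of_isLocalMin {κ : ℝ} (ha : 0 < a) (hA : 0 ≤ A)
    (hμ : μ ^ 2 = κ + (π / (2 * a)) ^ 2) {ψ : ℝ × ℝ → ℝ} {p : ℝ × ℝ}
    (hψ : ContDiffAt ℝ 2 ψ p) (hp : |p.1| ≤ a)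
    (hmin : IsLocalMin (fun x => ψ x - cosExpBarrier A a h μ x) p) :
    κ * cosExpBarrier A a h μ p ≤ lapP ψ p := by
  set k := π / (2 * a)
  set E := exp (-(μ * (h - a)))
  have hf : ∀ t, HasDerivAt (fun s => A * cos (k * s)) (-(A * k) * sin (k * t)) t := fun t =>
    (((hasDerivAt_id' t).const_mul k).cos.const_mul A).congr_deriv (by ring)
  have hf' : ∀ t, HasDerivAt (fun s => -(A * k) * sin (k * s))
      (-(A * k ^ 2) * cos (k * t)) t := fun t =>
    (((hasDerivAt_id' t).const_mul k).sin.const_mul (-(A * k))).congr_deriv (by ring)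
  have hg : ∀ t, HasDerivAt (fun s => exp (-(μ * (s - a))) - E)
      (-μ * exp (-(μ * (t - a)))) t := fun t =>
    ((((hasDerivAt_id' t).sub_const a).const_mul μ).fun_neg.exp.sub_const E).congr_deriv
      (by ring)
  have hg' : ∀ t, HasDerivAt (fun s => -μ * exp (-(μ * (s - a))))
      (μ ^ 2 * exp (-(μ * (t - a)))) t := fun t =>
    ((((hasDerivAt_id' t).sub_const a).const_mul μ).fun_neg.exp.const_mul (-μ)).congr_deriv
      (by ring)
  have hlap := hψ.add_le_lapP_of_isLocalMin_sub hf hf' hg hg' hmin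
  have hcE : 0 ≤ μ ^ 2 * (A * cos (k * p.1)) * E := by
    have := cos_pi_div_two_mul_nonneg_of_abs_le ha hp
    positivity
  calc κ * cosExpBarrier A a h μ p
      ≤ κ * cosExpBarrier A a h μ p + μ ^ 2 * (A * cos (k * p.1)) * E :=
        le_add_of_nonneg_right hcE
    _ = -(A * k ^ 2) * cos (k * p.1) * (exp (-(μ * (p.2 - a))) - E)
          + A * cos (k * p.1) * (μ ^ 2 * exp (-(μ * (p.2 - a)))) := by
      rw [show κ = μ ^ 2 - k ^ 2 by linarith, cosExpBarrier]
      ring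
    _ ≤ lapP ψ p := hlap

theorem cosExpBarrier_le_of_lapP_le {κ : ℝ} (ha : 0 < a) (hah : a < h) (hκ : 0 < κ)
    (hμ : μ ^ 2 = κ + (π / (2 * a)) ^ 2) (hA : 0 ≤ A) {ψ : ℝ × ℝ → ℝ}
    (hψc : ContinuousOn ψ (closure (Ioo (-a) a ×ˢ Ioo a h)))
    (hψd : ContDiffOn ℝ 2 ψ (Ioo (-a) a ×ˢ Ioo a h))
    (hψ0 : ∀ p ∈ closure (Ioo (-a) a ×ˢ Ioo a h), 0 ≤ ψ p)
    (hlap : ∀ p ∈ Ioo (-a) a ×ˢ Ioo a h, lapP ψ p ≤ κ * ψ p)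
    (hbot : ∀ s, |s| ≤ a → A ≤ ψ (s, a))
    {x : ℝ × ℝ} (hx : x ∈ closure (Ioo (-a) a ×ˢ Ioo a h)) :
    cosExpBarrier A a h μ x ≤ ψ x := by
  have hcl : closure (Ioo (-a) a ×ˢ Ioo a h) = Icc (-a) a ×ˢ Icc a h := by
    rw [closure_prod_eq, closure_Ioo (by linarith), closure_Ioo hah.ne]
  have hΩ : IsOpen (Ioo (-a) a ×ˢ Ioo a h) := isOpen_Ioo.prod isOpen_Ioo
  refine le_on_closure_of_le_at_minima hΩ (hcl ▸ isCompact_Icc.prod isCompact_Icc)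
    (Continuous.continuousOn (by unfold cosExpBarrier; fun_prop)) hψc ?_ ?_ hx
  · intro p hp hpΩ
    have hp' := hp
    rw [hcl] at hp'
    obtain ⟨⟨h1l, h1r⟩, h2l, h2r⟩ := hp'
    have hs : |p.1| ≤ a := abs_le.2 ⟨h1l, h1r⟩
    have hcases : |p.1| = a ∨ p.2 = a ∨ p.2 = h := by
      by_contra! hne
      rw [Ne, abs_eq ha.le, not_or] at hne
      exact hpΩ ⟨⟨lt_of_le_of_ne h1l (Ne.symm hne.1.2), lt_of_le_of_ne h1r hne.1.1⟩,
        lt_of_le_of_ne h2l (Ne.symm hne.2.1), lt_of_le_of_ne h2r hne.2.2⟩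
    rcases hcases with hside | hbottom | htop
    · rw [cosExpBarrier_eq_zero_of_abs_eq ha hside]
      exact hψ0 p hp
    · obtain ⟨s, t⟩ := p
      subst hbottom
      exact (cosExpBarrier_bottom_le ha hA hs).trans (hbot s hs)
    · obtain ⟨s, t⟩ := p
      subst htop
      rw [cosExpBarrier_top_eq_zero]
      exact hψ0 _ hp
  · intro p hp hmin
    have hlow := mul_cosExpBarrier_le_lapP_of_isLocalMin ha hA hμ
      (hψd.contDiffAt (hΩ.mem_nhds hp)) (abs_le.2 ⟨hp.1.1.le, hp.1.2.le⟩) hmin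
    exact le_of_mul_le_mul_left (hlow.trans (hlap p hp)) hκ

theorem div_four_mul_exp_le_cosExpBarrier (ha : 0 < a) (hA : 0 ≤ A) {s t : ℝ}
    (hs : |s| ≤ a / 2) (ht : 1 ≤ μ * (h - t)) :
    A / 4 * exp (-(μ * (t - a))) ≤ cosExpBarrier A a h μ (s, t) := by
  have hcos : 1 / 2 ≤ cos (π / (2 * a) * s) := by
    have hks : π / (2 * a) * |s| ≤ π / 3 :=
      calc π / (2 * a) * |s| ≤ π / (2 * a) * (a / 2) := by gcongr
        _ ≤ π / 3 := by field_simp; norm_num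
    rw [← cos_abs, abs_mul, abs_of_pos (by positivity : 0 < π / (2 * a)), ← cos_pi_div_three]
    exact cos_le_cos_of_nonneg_of_le_pi (by positivity) (by linarith [pi_pos]) hks
  have hE : exp (-(μ * (h - a))) ≤ exp (-(μ * (t - a))) / 2 :=
    calc exp (-(μ * (h - a))) = exp (-(μ * (t - a))) * exp (-(μ * (h - t))) := by
          rw [← exp_add]; ring_nf
      _ ≤ exp (-(μ * (t - a))) * exp (-1) := by gcongr
      _ ≤ exp (-(μ * (t - a))) * (1 / 2) := by gcongr; exact exp_neg_one_lt_half.le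
      _ = exp (-(μ * (t - a))) / 2 := by ring
  calc A / 4 * exp (-(μ * (t - a))) = A * (1 / 2) * (exp (-(μ * (t - a))) / 2) := by ring
    _ ≤ A * cos (π / (2 * a) * s) * (exp (-(μ * (t - a))) - exp (-(μ * (h - a)))) := by
      gcongr
      linarith

end CosExpBarrier

theorem rect_eq_prod (ε ρ L : ℝ) :
    rect ε ρ L = Ioo (-(L * ε)) (L * ε) ×ˢ Ioo (L * ε) (ρ - L * ε) := by
  ext p
  simp [rect, abs_lt, and_assoc]

theorem stmt_15 :
    ∃ C > (0:ℝ), ∀ L > (0:ℝ), ∀ δ > (0:ℝ), ∀ c > (0:ℝ),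
      ∃ c' > (0:ℝ), ∃ ε₀ > (0:ℝ), ∃ M > (0:ℝ),
        ∀ ε : ℝ, 0 < ε → ε < ε₀ →
        ∀ ρ : ℝ, M * ε ≤ ρ → ρ ≤ ε * |Real.log ε| →
        ∀ ψ : ℝ × ℝ → ℝ,
          ContinuousOn ψ (closure (rect ε ρ L)) →
          ContDiffOn ℝ 2 ψ (rect ε ρ L) →
          (∀ p ∈ closure (rect ε ρ L), 0 ≤ ψ p) →
          (∀ p ∈ rect ε ρ L, lapP ψ p ≤ (2 + δ) / ε ^ 2 * ψ p) →
          (∀ x₁ : ℝ, |x₁| ≤ L * ε → c / ε ≤ ψ (x₁, L * ε)) →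
          ∀ x₁ x₂ : ℝ, |x₁| < L * ε / 2 → ρ / 4 < x₂ → x₂ < 3 * ρ / 4 →
            c' / ε * Real.exp (-(Real.sqrt (2 + δ + C / L ^ 2)) * (x₂ - L * ε) / ε)
              ≤ ψ (x₁, x₂) := by
  refine ⟨π ^ 2 / 4, by positivity, fun L hL δ hδ c hc =>
    ⟨c / 4, by positivity, 1, one_pos, 4 * L + 4, by positivity, ?_⟩⟩
  intro ε hε _ ρ hρ _ ψ hψc hψd hψ0 hlap hbot x₁ x₂ hx₁ hx₂ hx₂'
  rw [rect_eq_prod] at hψc hψd hψ0 hlap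
  set a := L * ε
  set μ := √(2 + δ + π ^ 2 / 4 / L ^ 2) / ε with hμ_def
  have ha : 0 < a := by positivity
  have hμ : μ ^ 2 = (2 + δ) / ε ^ 2 + (π / (2 * a)) ^ 2 := by
    rw [hμ_def, div_pow, sq_sqrt (by positivity)]
    field_simp
    ring
  have hμε : 1 ≤ μ * ε := by
    rw [hμ_def, div_mul_cancel₀ _ hε.ne', one_le_sqrt]
    linarith [show 0 ≤ π ^ 2 / 4 / L ^ 2 by positivity]
  have hx : (x₁, x₂) ∈ Ioo (-a) a ×ˢ Ioo a (ρ - a) := by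
    rw [abs_lt] at hx₁
    exact ⟨⟨by linarith, by linarith⟩, by linarith, by linarith⟩
  have hbarrier := cosExpBarrier_le_of_lapP_le (h := ρ - a) ha (by linarith) (by positivity) hμ
    (by positivity) hψc hψd hψ0 hlap hbot (subset_closure hx)
  have hlow := div_four_mul_exp_le_cosExpBarrier (h := ρ - a) (A := c / ε) ha (by positivity) hx₁.le
    (t := x₂) (hμε.trans (by gcongr; linarith))
  calc c / 4 / ε * exp (-√(2 + δ + π ^ 2 / 4 / L ^ 2) * (x₂ - a) / ε)
      = c / ε / 4 * exp (-(μ * (x₂ - a))) := by rw [hμ_def]; ring_nf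
    _ ≤ ψ (x₁, x₂) := hlow.trans hbarrier

end
end

section
/- Let f : [−2, 2] → ℝ be a C² function satisfying f'' ≥ −C f² − C ε^{1/16} f, 0 < f ≤ 1, and ∫_{−2}^{2} f ≤ η for a sufficiently small universal constant η = η(C) > 0. Then, for ε small enough, sup_{[−1,1]} f ≤ 1/4. -/
/-!
Since `0 < f ≤ 1` and `ε < 1`, the differential inequality gives `f'' ≥ -2C`, so `f + C t²` is
convex on `[-2, 2]`. As `∫ f ≤ η` is small, every subinterval of length `δ ≈ 1/C` contains a
point where `f ≤ 1/8`. For `x ∈ [-1, 1]` pick such points on either side of `x` within distance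
`2δ`; convexity bounds `f x` by `1/8` plus the variation `C (y² - x²) ≤ 6 C δ ≤ 1/8`.
-/

open Real MeasureTheory Set

theorem convexOn_add_mul_sq_of_neg_two_mul_le_deriv2 {a b K : ℝ} {f f' f'' : ℝ → ℝ}
    (hfc : ContinuousOn f (Icc a b)) (hf : ∀ x ∈ Ioo a b, HasDerivAt f (f' x) x)
    (hf' : ∀ x ∈ Ioo a b, HasDerivAt f' (f'' x) x) (h : ∀ x ∈ Ioo a b, -(2 * K) ≤ f'' x) :
    ConvexOn ℝ (Icc a b) (fun x => f x + K * x ^ 2) := by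
  refine convexOn_of_hasDerivWithinAt2_nonneg (convex_Icc a b)
    (hfc.add (continuous_const.mul (continuous_pow 2)).continuousOn)
    (f' := fun x => f' x + K * (2 * x)) (f'' := fun x => f'' x + K * 2) ?_ ?_ ?_
    <;> intro x hx <;> rw [interior_Icc] at hx
  · exact ((hf x hx).add (((hasDerivAt_pow 2 x).const_mul K).congr_deriv
      (by ring))).hasDerivWithinAt
  · exact ((hf' x hx).add ((((hasDerivAt_id x).const_mul 2).const_mul K).congr_deriv
      (by ring))).hasDerivWithinAt
  · linarith [h x hx]

theorem le_max_add_of_convexOn_add_mul_sq {s : Set ℝ} {K x y₁ y₂ : ℝ} {f : ℝ → ℝ}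
    (hconv : ConvexOn ℝ s (fun x => f x + K * x ^ 2)) (hK : 0 ≤ K) (hy₁ : y₁ ∈ s) (hy₂ : y₂ ∈ s)
    (hx : x ∈ Icc y₁ y₂) :
    f x ≤ max (f y₁) (f y₂) + K * (max (y₁ ^ 2) (y₂ ^ 2) - x ^ 2) := by
  have hseg : x ∈ segment ℝ y₁ y₂ := by rwa [segment_eq_Icc (hx.1.trans hx.2)]
  have key := hconv.le_on_segment hy₁ hy₂ hseg
  have hK₁ : K * y₁ ^ 2 ≤ K * max (y₁ ^ 2) (y₂ ^ 2) := by gcongr; exact le_max_left _ _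
  have hK₂ : K * y₂ ^ 2 ≤ K * max (y₁ ^ 2) (y₂ ^ 2) := by gcongr; exact le_max_right _ _
  rcases le_max_iff.mp key with h | h <;> linarith [le_max_left (f y₁) (f y₂),
    le_max_right (f y₁) (f y₂)]

theorem sq_le_sq_add_of_abs_sub_le {x y r : ℝ} (hx : |x| ≤ 1) (hr : r ≤ 1) (h : |y - x| ≤ r) :
    y ^ 2 ≤ x ^ 2 + 3 * r := by
  obtain ⟨hx₁, hx₂⟩ := abs_le.1 hx
  obtain ⟨h₁, h₂⟩ := abs_le.1 h
  nlinarith [mul_nonneg (sub_nonneg.2 h₂) (neg_le_iff_add_nonneg.1 h₁),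
    mul_nonneg (sub_nonneg.2 h₂) (sub_nonneg.2 hx₂), mul_nonneg (neg_le_iff_add_nonneg.1 h₁)
    (neg_le_iff_add_nonneg.1 hx₁)]

theorem exists_mem_Icc_le_of_setIntegral_le {s : Set ℝ} {f : ℝ → ℝ} {a b m : ℝ} (hab : a < b)
    (hs : MeasurableSet s) (habs : Icc a b ⊆ s) (hf : IntegrableOn f s) (hf0 : ∀ x ∈ s, 0 ≤ f x)
    (h : ∫ x in s, f x ≤ (b - a) * m) : ∃ y ∈ Icc a b, f y ≤ m := by
  have hvol : volume (Icc a b) = ENNReal.ofReal (b - a) := Real.volume_Icc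
  have hne : volume (Icc a b) ≠ 0 := by simp [hvol, hab]
  obtain ⟨y, hy, hfy⟩ := exists_le_setAverage hne (by simp [hvol]) (hf.mono_set habs)
  refine ⟨y, hy, hfy.trans ?_⟩
  have hmono : ∫ x in Icc a b, f x ≤ ∫ x in s, f x :=
    setIntegral_mono_set hf (ae_restrict_of_forall_mem hs hf0) habs.eventuallyLE
  rw [setAverage_eq, measureReal_def, hvol, ENNReal.toReal_ofReal (sub_nonneg.2 hab.le),
    smul_eq_mul, inv_mul_le_iff₀ (sub_pos.2 hab)]
  exact hmono.trans h

theorem le_quarter_of_convexOn_add_mul_sq_of_setIntegral_le {f : ℝ → ℝ} {K δ x : ℝ}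
    (hK : 0 ≤ K) (hδ : 0 < δ) (hδ_le : δ ≤ 1/2) (hKδ : K * δ ≤ 1/48)
    (hconv : ConvexOn ℝ (Icc (-2) 2) (fun x => f x + K * x ^ 2))
    (hf : IntegrableOn f (Icc (-2) 2)) (hf0 : ∀ x ∈ Icc (-2:ℝ) 2, 0 ≤ f x)
    (hint : ∫ x in Icc (-2:ℝ) 2, f x ≤ δ / 8) (hx : x ∈ Icc (-1:ℝ) 1) : f x ≤ 1/4 := by
  obtain ⟨hx₁, hx₂⟩ := hx
  have small_point : ∀ a, Icc a (a + δ) ⊆ Icc (-2:ℝ) 2 → ∃ y ∈ Icc a (a + δ), f y ≤ 1/8 :=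
    fun a ha => exists_mem_Icc_le_of_setIntegral_le (by linarith) measurableSet_Icc ha hf hf0
      (by linarith)
  obtain ⟨y₁, ⟨hy₁l, hy₁r⟩, hfy₁⟩ := small_point (x - 2 * δ)
    (Icc_subset_Icc (by linarith) (by linarith))
  obtain ⟨y₂, ⟨hy₂l, hy₂r⟩, hfy₂⟩ := small_point (x + δ)
    (Icc_subset_Icc (by linarith) (by linarith))
  have hx_abs : |x| ≤ 1 := abs_le.2 ⟨hx₁, hx₂⟩
  have hsq : max (y₁ ^ 2) (y₂ ^ 2) ≤ x ^ 2 + 3 * (2 * δ) := max_le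
    (sq_le_sq_add_of_abs_sub_le hx_abs (by linarith) (abs_le.2 ⟨by linarith, by linarith⟩))
    (sq_le_sq_add_of_abs_sub_le hx_abs (by linarith) (abs_le.2 ⟨by linarith, by linarith⟩))
  have hfx := le_max_add_of_convexOn_add_mul_sq (y₁ := y₁) (y₂ := y₂) (x := x) hconv hK
    ⟨by linarith, by linarith⟩ ⟨by linarith, by linarith⟩ ⟨by linarith, by linarith⟩
  nlinarith [max_le hfy₁ hfy₂, mul_le_mul_of_nonneg_left hsq hK]

theorem stmt_16 :
    ∀ C > (0:ℝ), ∃ η > (0:ℝ), ∃ ε₀ > (0:ℝ), ∀ ε : ℝ, 0 < ε → ε < ε₀ →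
      ∀ f f' f'' : ℝ → ℝ,
        (∀ x ∈ Set.Icc (-2:ℝ) 2, HasDerivAt f (f' x) x) →
        (∀ x ∈ Set.Icc (-2:ℝ) 2, HasDerivAt f' (f'' x) x) →
        (∀ x ∈ Set.Icc (-2:ℝ) 2, 0 < f x ∧ f x ≤ 1) →
        (∀ x ∈ Set.Icc (-2:ℝ) 2, -C * f x ^ 2 - C * ε ^ ((1:ℝ)/16) * f x ≤ f'' x) →
        (∫ x in Set.Icc (-2:ℝ) 2, f x) ≤ η →
        ∀ x ∈ Set.Icc (-1:ℝ) 1, f x ≤ 1/4 := by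
  intro C hC
  set δ : ℝ := min (1/2) (1/(48*C))
  have hδ : 0 < δ := lt_min (by norm_num) (by positivity)
  have hCδ : C * δ ≤ 1/48 :=
    calc C * δ ≤ C * (1/(48*C)) := by gcongr; exact min_le_right _ _
      _ = 1/48 := by field_simp
  refine ⟨δ/8, by positivity, 1, one_pos, ?_⟩
  intro ε hε hε₁ f f' f'' hf hf' hbd hineq hint x hx
  have hε16 : ε ^ ((1:ℝ)/16) ≤ 1 := rpow_le_one hε.le hε₁.le (by norm_num)
  have hf''_ge : ∀ t ∈ Ioo (-2:ℝ) 2, -(2 * C) ≤ f'' t := fun t ht => by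
    obtain ⟨hpos, hle⟩ := hbd t (Ioo_subset_Icc_self ht)
    have hεf : ε ^ ((1:ℝ)/16) * f t ≤ 1 := mul_le_one₀ hε16 hpos.le hle
    have hsq : f t ^ 2 ≤ 1 := pow_le_one₀ hpos.le hle
    nlinarith [hineq t (Ioo_subset_Icc_self ht), mul_le_mul_of_nonneg_left hsq hC.le,
      mul_le_mul_of_nonneg_left hεf hC.le]
  have hfc : ContinuousOn f (Icc (-2) 2) := fun t ht => (hf t ht).continuousAt.continuousWithinAt
  have hconv := convexOn_add_mul_sq_of_neg_two_mul_le_deriv2 hfc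
    (fun t ht => hf t (Ioo_subset_Icc_self ht)) (fun t ht => hf' t (Ioo_subset_Icc_self ht))
    hf''_ge
  exact le_quarter_of_convexOn_add_mul_sq_of_setIntegral_le hC.le hδ (min_le_left _ _) hCδ hconv
    hfc.integrableOn_Icc (fun t ht => (hbd t ht).1.le) hint hx
end

section
/- Let u ∈ C²(ℝ²) solve Δu = W'(u), |u| < 1, with finite Morse index, and fix b ∈ (0,1). Suppose the curvature decay |B(u)(x)| ≤ C/|x| holds on {|u| ≤ 1−b} outside B_{R(b)}(0), and suppose the rescaled second-order estimate (Theorem 3.1) holds: any stable solution of the ε-Allen–Cahn equation in B₁ with |B(u_ε)| ≤ C on {|u_ε| < 1−b} satisfies |B(u_ε)| ≤ C ε^{1/7} on {|u_ε| < 1−b} ∩ B_{1/2}. Then the improved decay |B(u)(x)| ≤ C' |x|^{−8/7} holds on {|u| < 1−b} outside B_{R(b)}(0). -/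
/-! A solution of finite Morse index is stable outside some ball `B_{R₀}`. Far out, at a point `X`
with `|u X| < 1 - b`, blow up by `ε = 2 / ‖X‖`: `v y = u (ε⁻¹ • y + X)` solves the ε-Allen–Cahn
equation on `B₁`, is stable there (a change of variables in the quadratic form), and the decay
`|B(u)| ≤ C₁ / |x|` on `B_{‖X‖/2}(X)` becomes `|B(v)| ≤ C₁` on `B₁`. The second order estimate gives
`|B(v)(0)| ≤ C₃ ε^{1/7}`, and `B(v)(0) = ε⁻¹ B(u)(X)`, so `|B(u)(X)| ≤ C₃ ε^{8/7} = C₃ 2^{8/7} ‖X‖^{-8/7}`.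
-/

open Real Filter MeasureTheory Metric Set Topology

noncomputable section

abbrev E2 : Type := EuclideanSpace ℝ (Fin 2)

/-- The Laplacian on `ℝ²`. -/
def lap2 (u : E2 → ℝ) (x : E2) : ℝ :=
  ∑ i : Fin 2, iteratedFDeriv ℝ 2 u x (fun _ => EuclideanSpace.single i (1:ℝ))

/-- The quadratic form of the linearized operator. -/
def quadForm (W : ℝ → ℝ) (u φ : E2 → ℝ) : ℝ :=
  ∫ x, (‖gradient φ x‖ ^ 2 + iteratedDeriv 2 W (u x) * φ x ^ 2)

/-- The Morse index of `u` is at least `N`. -/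
def hasIndexAtLeast (W : ℝ → ℝ) (u : E2 → ℝ) (N : ℕ) : Prop :=
  ∃ φ : Fin N → E2 → ℝ,
    (∀ i, ContDiff ℝ (⊤ : ℕ∞) (φ i) ∧ HasCompactSupport (φ i)) ∧
    LinearIndependent ℝ φ ∧
    ∀ c : Fin N → ℝ, c ≠ 0 → quadForm W u (fun x => ∑ i, c i * φ i x) < 0

/-- `u` has finite Morse index. -/
def finiteMorseIndex (W : ℝ → ℝ) (u : E2 → ℝ) : Prop :=
  ∃ N : ℕ, ¬ hasIndexAtLeast W u (N + 1)

/-- The full derivative of the unit normal `∇u/|∇u|`; its norm is `|B(u)|`. -/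
def Bmap (u : E2 → ℝ) (x : E2) : E2 →L[ℝ] E2 :=
  fderiv ℝ (fun y => ‖gradient u y‖⁻¹ • gradient u y) x

theorem fderiv_comp_smul_add {𝕜 E F : Type*} [NontriviallyNormedField 𝕜] [NormedAddCommGroup E]
    [NormedSpace 𝕜 E] [NormedAddCommGroup F] [NormedSpace 𝕜 F] (f : E → F) (c : 𝕜) (a z : E) :
    fderiv 𝕜 (fun z => f (c • z + a)) z = c • fderiv 𝕜 f (c • z + a) := by
  rw [fderiv_comp_smul (f := fun w => f (w + a)) c, fderiv_comp_add_right]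

section GradientCalculus

variable {F : Type*} [NormedAddCommGroup F] [InnerProductSpace ℝ F] [CompleteSpace F]

theorem gradient_comp_smul_add (f : F → ℝ) (c : ℝ) (a z : F) :
    gradient (fun z => f (c • z + a)) z = c • gradient f (c • z + a) := by
  simp only [gradient, fderiv_comp_smul_add, map_smul]

theorem gradient_eq_zero_of_notMem_tsupport {f : F → ℝ} {x : F} (h : x ∉ tsupport f) :
    gradient f x = 0 := by
  rw [gradient, fderiv_of_notMem_tsupport ℝ h, map_zero]

theorem gradient_fun_sum {ι : Type*} (s : Finset ι) {φ : ι → F → ℝ} (c : ι → ℝ) {x : F}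
    (h : ∀ i ∈ s, DifferentiableAt ℝ (φ i) x) :
    gradient (fun y => ∑ i ∈ s, c i * φ i y) x = ∑ i ∈ s, c i • gradient (φ i) x := by
  rw [gradient, fderiv_fun_sum fun i hi => (h i hi).const_mul (c i), map_sum]
  refine Finset.sum_congr rfl fun i hi => ?_
  rw [fderiv_const_mul (h i hi), map_smul, gradient]

end GradientCalculus

theorem norm_sub_lt_norm_smul_add {F : Type*} [NormedAddCommGroup F] [NormedSpace ℝ F] {r : ℝ}
    (hr : 0 < r) {y : F} (hy : ‖y‖ < 1) (a : F) : ‖a‖ - r < ‖r • y + a‖ := by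
  have hry : ‖r • y‖ < r := by
    rw [norm_smul, Real.norm_of_nonneg hr.le]
    exact mul_lt_of_lt_one_right hr hy
  have := norm_sub_le (r • y + a) (r • y)
  rw [add_sub_cancel_left] at this
  linarith

theorem lap2_comp_smul_add (f : E2 → ℝ) (c : ℝ) (a y : E2) :
    lap2 (fun z => f (c • z + a)) y = c ^ 2 * lap2 f (c • y + a) := by
  have hfderiv : fderiv ℝ (fun z => f (c • z + a)) = c • fun z => fderiv ℝ f (c • z + a) :=
    funext (fderiv_comp_smul_add f c a)
  have hfderiv2 : fderiv ℝ (fderiv ℝ fun z => f (c • z + a)) y =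
      (c * c) • fderiv ℝ (fderiv ℝ f) (c • y + a) := by
    rw [hfderiv, fderiv_const_smul_field (f := fun z => fderiv ℝ f (c • z + a)), Pi.smul_apply,
      fderiv_comp_smul_add, smul_smul]
  simp only [lap2, iteratedFDeriv_two_apply, hfderiv2, Finset.mul_sum, pow_two]
  rfl

theorem Bmap_comp_smul_add (f : E2 → ℝ) {c : ℝ} (hc : 0 < c) (a y : E2) :
    Bmap (fun z => f (c • z + a)) y = c • Bmap f (c • y + a) := by
  have hnormal : (fun z => ‖gradient (fun z => f (c • z + a)) z‖⁻¹ •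
      gradient (fun z => f (c • z + a)) z) =
      fun z => ‖gradient f (c • z + a)‖⁻¹ • gradient f (c • z + a) := by
    funext z
    rw [gradient_comp_smul_add, norm_smul, Real.norm_of_nonneg hc.le, smul_smul, mul_inv,
      mul_right_comm, inv_mul_cancel₀ hc.ne', one_mul]
  rw [Bmap, hnormal, fderiv_comp_smul_add (fun w => ‖gradient f w‖⁻¹ • gradient f w), Bmap]

def StableOutside (W : ℝ → ℝ) (u : E2 → ℝ) (R : ℝ) : Prop :=
  ∀ ψ : E2 → ℝ, ContDiff ℝ (⊤ : ℕ∞) ψ → HasCompactSupport ψ →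
    tsupport ψ ⊆ {z | R < ‖z‖} → 0 ≤ quadForm W u ψ

section MorseIndex

open Function

variable {W : ℝ → ℝ} {u : E2 → ℝ}

theorem integrable_quadForm_integrand (hW : ContDiff ℝ 2 W) (hu : Continuous u)
    {φ : E2 → ℝ} (hφ : ContDiff ℝ 1 φ) (hcs : HasCompactSupport φ) :
    Integrable fun x => ‖gradient φ x‖ ^ 2 + iteratedDeriv 2 W (u x) * φ x ^ 2 := by
  refine Continuous.integrable_of_hasCompactSupport ?_ (HasCompactSupport.intro hcs fun x hx => ?_)
  · have hgrad : Continuous (gradient φ) :=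
      (InnerProductSpace.toDual ℝ E2).symm.continuous.comp (hφ.continuous_fderiv one_ne_zero)
    exact (hgrad.norm.pow 2).add
      (((hW.continuous_iteratedDeriv 2 le_rfl).comp hu).mul (hφ.continuous.pow 2))
  · simp [gradient_eq_zero_of_notMem_tsupport hx, image_eq_zero_of_notMem_tsupport hx]

theorem quadForm_sum_of_pairwise_disjoint (hW : ContDiff ℝ 2 W) (hu : Continuous u)
    {ι : Type*} [Fintype ι] {φ : ι → E2 → ℝ} (hφ : ∀ i, ContDiff ℝ 1 (φ i))
    (hcs : ∀ i, HasCompactSupport (φ i)) (hdisj : Pairwise (Disjoint on fun i => tsupport (φ i)))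
    (c : ι → ℝ) :
    quadForm W u (fun x => ∑ i, c i * φ i x) = ∑ i, c i ^ 2 * quadForm W u (φ i) := by
  have hpt : ∀ x, ‖gradient (fun y => ∑ i, c i * φ i y) x‖ ^ 2
      + iteratedDeriv 2 W (u x) * (∑ i, c i * φ i x) ^ 2
      = ∑ i, c i ^ 2 * (‖gradient (φ i) x‖ ^ 2 + iteratedDeriv 2 W (u x) * φ i x ^ 2) := by
    intro x
    rw [gradient_fun_sum _ c fun i _ => ((hφ i).differentiable one_ne_zero) x]
    by_cases hx : ∃ i₀, x ∈ tsupport (φ i₀)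
    · obtain ⟨i₀, hi₀⟩ := hx
      have hout : ∀ j ≠ i₀, x ∉ tsupport (φ j) := fun j hj hxj =>
        Set.disjoint_left.1 (hdisj hj) hxj hi₀
      rw [Fintype.sum_eq_single i₀ fun j hj => by
          rw [gradient_eq_zero_of_notMem_tsupport (hout j hj), smul_zero],
        Fintype.sum_eq_single i₀ fun j hj => by
          rw [image_eq_zero_of_notMem_tsupport (hout j hj), mul_zero],
        Fintype.sum_eq_single i₀ fun j hj => by
          simp [gradient_eq_zero_of_notMem_tsupport (hout j hj),
            image_eq_zero_of_notMem_tsupport (hout j hj)],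
        norm_smul, Real.norm_eq_abs, mul_pow, sq_abs]
      ring
    · push Not at hx
      simp [gradient_eq_zero_of_notMem_tsupport (hx _), image_eq_zero_of_notMem_tsupport (hx _)]
  rw [quadForm, integral_congr_ae (ae_of_all _ hpt), integral_finsetSum _ fun i _ =>
    (integrable_quadForm_integrand hW hu (hφ i) (hcs i)).const_mul _]
  simp only [integral_const_mul, quadForm]

theorem hasIndexAtLeast_of_pairwise_disjoint (hW : ContDiff ℝ 2 W) (hu : Continuous u) {n : ℕ}
    {φ : Fin n → E2 → ℝ} (hφ : ∀ i, ContDiff ℝ (⊤ : ℕ∞) (φ i))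
    (hcs : ∀ i, HasCompactSupport (φ i)) (hdisj : Pairwise (Disjoint on fun i => tsupport (φ i)))
    (hneg : ∀ i, quadForm W u (φ i) < 0) :
    hasIndexAtLeast W u n := by
  have hφ₁ : ∀ i, ContDiff ℝ 1 (φ i) := fun i => (hφ i).of_le (by exact_mod_cast le_top)
  refine ⟨φ, fun i => ⟨hφ i, hcs i⟩, Fintype.linearIndependent_iff.2 fun g hg i => ?_,
    fun c hc => ?_⟩
  · obtain ⟨x, hx⟩ : ∃ x, φ i x ≠ 0 := by
      by_contra! h
      have := hneg i
      simp [show φ i = fun _ => 0 from funext h, quadForm] at this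
    have hxi : x ∈ tsupport (φ i) := subset_tsupport _ hx
    have hgx := congrFun hg x
    rw [Finset.sum_apply, Fintype.sum_eq_single i fun j hj => by
      simp [image_eq_zero_of_notMem_tsupport fun hxj => Set.disjoint_left.1 (hdisj hj) hxj hxi]]
      at hgx
    exact (mul_eq_zero.1 hgx).resolve_right hx
  · obtain ⟨i₀, hi₀⟩ := ne_iff.1 hc
    rw [quadForm_sum_of_pairwise_disjoint hW hu hφ₁ hcs hdisj]
    calc ∑ i, c i ^ 2 * quadForm W u (φ i) < ∑ _i : Fin n, (0 : ℝ) :=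
          Finset.sum_lt_sum (fun i _ => mul_nonpos_of_nonneg_of_nonpos (sq_nonneg _) (hneg i).le)
            ⟨i₀, Finset.mem_univ _, mul_neg_of_pos_of_neg (sq_pos_of_ne_zero hi₀) (hneg i₀)⟩
      _ = 0 := Finset.sum_const_zero

-- Otherwise there are negative directions supported in `N + 1` disjoint annuli.
theorem exists_stableOutside (hW : ContDiff ℝ 2 W) (hu : Continuous u)
    (hmorse : finiteMorseIndex W u) : ∃ R, StableOutside W u R := by
  obtain ⟨N, hN⟩ := hmorse
  by_contra! hunstable
  have hannulus : ∀ R, ∃ ψ : E2 → ℝ, ∃ M, R < M ∧ ContDiff ℝ (⊤ : ℕ∞) ψ ∧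
      HasCompactSupport ψ ∧ tsupport ψ ⊆ {z | R < ‖z‖} ∧ tsupport ψ ⊆ closedBall 0 M ∧
      quadForm W u ψ < 0 := by
    intro R
    obtain ⟨ψ, hψ, hcs, hout, hneg⟩ : ∃ ψ : E2 → ℝ, ContDiff ℝ (⊤ : ℕ∞) ψ ∧
        HasCompactSupport ψ ∧ tsupport ψ ⊆ {z | R < ‖z‖} ∧ quadForm W u ψ < 0 := by
      simpa [StableOutside] using hunstable R
    obtain ⟨M, hM⟩ := hcs.isBounded.subset_closedBall 0
    exact ⟨ψ, max M R + 1, by linarith [le_max_right M R], hψ, hcs, hout,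
      hM.trans (closedBall_subset_closedBall (by linarith [le_max_left M R])), hneg⟩
  choose Ψ M hRM hΨ hcs hout hsub hneg using hannulus
  set r : ℕ → ℝ := fun k => M^[k] 0
  have hr : ∀ k, r (k + 1) = M (r k) := fun k => iterate_succ_apply' M k 0
  have hrmono : StrictMono r := strictMono_nat_of_lt_succ fun k => hr k ▸ hRM (r k)
  have hdisj : Pairwise (Disjoint on fun i : Fin (N + 1) => tsupport (Ψ (r i))) := by
    refine (pairwise_disjoint_on _).2 fun i j hij => Set.disjoint_left.2 fun z hzi hzj => ?_
    have hzi' : ‖z‖ ≤ r (i + 1) := by simpa [hr] using hsub _ hzi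
    have hzj' : r j < ‖z‖ := hout _ hzj
    linarith [hrmono.monotone (show (i : ℕ) + 1 ≤ j from hij)]
  exact hN (hasIndexAtLeast_of_pairwise_disjoint hW hu (fun _ => hΨ _) (fun _ => hcs _) hdisj
    fun _ => hneg _)

end MorseIndex

theorem integral_rescaled_quadForm (W : ℝ → ℝ) (u φ : E2 → ℝ) {ε : ℝ} (hε : 0 < ε) (a : E2) :
    ∫ y, (ε * ‖gradient φ y‖ ^ 2 + ε⁻¹ * iteratedDeriv 2 W (u (ε⁻¹ • y + a)) * φ y ^ 2) =
      ε * quadForm W u (fun z => φ (ε • (z - a))) := by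
  set h : E2 → ℝ := fun y =>
    ε ^ 2 * ‖gradient φ y‖ ^ 2 + iteratedDeriv 2 W (u (ε⁻¹ • y + a)) * φ y ^ 2
  have hpt : ∀ z, ‖gradient (fun z => φ (ε • (z - a))) z‖ ^ 2
      + iteratedDeriv 2 W (u z) * φ (ε • (z - a)) ^ 2 = h (ε • (z - a)) := by
    intro z
    have hgrad : gradient (fun z => φ (ε • (z - a))) z = ε • gradient φ (ε • (z - a)) := by
      simpa only [← sub_eq_add_neg, ← smul_sub] using gradient_comp_smul_add φ ε (-(ε • a)) z
    have hz : ε⁻¹ • ε • (z - a) + a = z := by rw [inv_smul_smul₀ hε.ne', sub_add_cancel]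
    simp only [h, hgrad, hz, norm_smul, Real.norm_of_nonneg hε.le, mul_pow]
  have hchange : ∫ z, h (ε • (z - a)) = (ε ^ 2)⁻¹ * ∫ y, h y := by
    rw [integral_sub_right_eq_self (fun y => h (ε • y)) a, Measure.integral_comp_smul,
      finrank_euclideanSpace_fin, abs_of_pos (by positivity), smul_eq_mul]
  rw [quadForm, integral_congr_ae (ae_of_all _ hpt), hchange, ← mul_assoc, ← integral_const_mul]
  congr 1 with y
  simp only [h]
  field_simp

theorem StableOutside.rescale {W : ℝ → ℝ} {u : E2 → ℝ} {R : ℝ} (hstable : StableOutside W u R)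
    {ε : ℝ} (hε : 0 < ε) {a : E2} (ha : R + ε⁻¹ ≤ ‖a‖) {φ : E2 → ℝ}
    (hφ : ContDiff ℝ (⊤ : ℕ∞) φ) (hcs : HasCompactSupport φ) (hsupp : tsupport φ ⊆ ball 0 1) :
    0 ≤ ∫ y, (ε * ‖gradient φ y‖ ^ 2 + ε⁻¹ * iteratedDeriv 2 W (u (ε⁻¹ • y + a)) * φ y ^ 2) := by
  rw [integral_rescaled_quadForm W u φ hε a]
  refine mul_nonneg hε.le (hstable _ ?_ ?_ fun z hz => ?_)
  · exact hφ.comp ((contDiff_id.sub contDiff_const).const_smul ε)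
  · exact (hcs.comp_smul hε.ne').comp_homeomorph (Homeomorph.subRight a)
  · have hy : ‖ε • (z - a)‖ < 1 := mem_ball_zero_iff.1
      (hsupp (tsupport_comp_subset_preimage φ (f := fun z => ε • (z - a)) (by fun_prop) hz))
    have hfar := norm_sub_lt_norm_smul_add (inv_pos.2 hε) hy a
    rw [inv_smul_smul₀ hε.ne', sub_add_cancel] at hfar
    show R < ‖z‖
    linarith

theorem norm_Bmap_rescale_le {u : E2 → ℝ} {t C R : ℝ}
    (hdecay : ∀ x, |u x| ≤ t → R ≤ ‖x‖ → ‖Bmap u x‖ ≤ C / ‖x‖) (hC : 0 ≤ C) {ε : ℝ}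
    (hε : 0 < ε) {a : E2} (hR : R ≤ ε⁻¹) (ha : 2 * ε⁻¹ ≤ ‖a‖) {y : E2} (hy : y ∈ ball 0 1)
    (hut : |u (ε⁻¹ • y + a)| ≤ t) :
    ‖Bmap (fun y => u (ε⁻¹ • y + a)) y‖ ≤ C := by
  have hfar : ε⁻¹ < ‖ε⁻¹ • y + a‖ := by
    linarith [norm_sub_lt_norm_smul_add (inv_pos.2 hε) (mem_ball_zero_iff.1 hy) a]
  rw [Bmap_comp_smul_add u (inv_pos.2 hε), norm_smul, Real.norm_of_nonneg (inv_pos.2 hε).le]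
  calc ε⁻¹ * ‖Bmap u (ε⁻¹ • y + a)‖ ≤ ε⁻¹ * (C / ‖ε⁻¹ • y + a‖) := by
        gcongr
        exact hdecay _ hut (hR.trans hfar.le)
    _ ≤ ε⁻¹ * (C / ε⁻¹) := by gcongr
    _ = C := by field_simp

theorem stmt_19_general (W : ℝ → ℝ) (hW : ContDiff ℝ 2 W)
    (u : E2 → ℝ) (hu : ContDiff ℝ 2 u) (hub : ∀ x, |u x| < 1)
    (heq : ∀ x, lap2 u x = deriv W (u x))
    (hmorse : finiteMorseIndex W u)
    (b : ℝ)
    (C₁ R₁ : ℝ) (hC₁ : 0 < C₁)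
    -- the curvature decay `|B(u)(x)| ≤ C/|x|` on `{|u| ≤ 1-b}` outside `B_{R₁}` :
    (hdecay : ∀ x : E2, |u x| ≤ 1 - b → R₁ ≤ ‖x‖ → ‖Bmap u x‖ ≤ C₁ / ‖x‖)
    -- the rescaled second-order estimate (Theorem 3.1) :
    (hthm : ∀ C₂ > (0:ℝ), ∃ C₃ > (0:ℝ), ∃ ε₀ > (0:ℝ), ∀ ε : ℝ, 0 < ε → ε < ε₀ →
      ∀ v : E2 → ℝ,
        ContDiffOn ℝ 2 v (Metric.ball (0:E2) 1) →
        (∀ x ∈ Metric.ball (0:E2) 1, |v x| < 1) →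
        (∀ x ∈ Metric.ball (0:E2) 1, ε * lap2 v x = ε⁻¹ * deriv W (v x)) →
        (∀ φ : E2 → ℝ, ContDiff ℝ (⊤ : ℕ∞) φ → HasCompactSupport φ →
          tsupport φ ⊆ Metric.ball (0:E2) 1 →
          0 ≤ ∫ x, (ε * ‖gradient φ x‖ ^ 2 + ε⁻¹ * iteratedDeriv 2 W (v x) * φ x ^ 2)) →
        (∀ x ∈ Metric.ball (0:E2) 1, |v x| < 1 - b → ‖Bmap v x‖ ≤ C₂) →
        ∀ x ∈ Metric.ball (0:E2) (1/2), |v x| < 1 - b →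
          ‖Bmap v x‖ ≤ C₃ * ε ^ ((1:ℝ)/7)) :
    ∃ C' > (0:ℝ), ∃ R' > (0:ℝ), ∀ x : E2, |u x| < 1 - b → R' ≤ ‖x‖ →
      ‖Bmap u x‖ ≤ C' * ‖x‖ ^ (-(8:ℝ)/7) := by
  obtain ⟨R₀, hR₀⟩ := exists_stableOutside hW hu.continuous hmorse
  obtain ⟨C₃, hC₃, ε₀, hε₀, hest⟩ := hthm C₁ hC₁
  refine ⟨C₃ * 2 ^ ((8:ℝ)/7), by positivity, 2 * max (max R₁ R₀) ε₀⁻¹ + 1, by positivity,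
    fun X hXu hX => ?_⟩
  have hXR₁ : R₁ ≤ ‖X‖ / 2 := by linarith [le_max_left R₁ R₀, le_max_left (max R₁ R₀) ε₀⁻¹]
  have hXR₀ : R₀ ≤ ‖X‖ / 2 := by linarith [le_max_right R₁ R₀, le_max_left (max R₁ R₀) ε₀⁻¹]
  have hXε₀ : 2 * ε₀⁻¹ < ‖X‖ := by linarith [le_max_right (max R₁ R₀) ε₀⁻¹]
  have hXpos : 0 < ‖X‖ := lt_trans (by positivity) hXε₀
  set ε := 2 / ‖X‖ with hεdef
  have hε : 0 < ε := by positivity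
  have hεinv : ε⁻¹ = ‖X‖ / 2 := inv_div 2 ‖X‖
  have hεε₀ : ε < ε₀ := by
    rw [div_lt_iff₀ hXpos]
    nlinarith [mul_inv_cancel₀ hε₀.ne']
  have hv := hest ε hε hεε₀ (fun y => u (ε⁻¹ • y + X)) (hu.comp (by fun_prop)).contDiffOn
    (fun y _ => hub _)
    (fun y _ => by rw [lap2_comp_smul_add, heq]; field_simp)
    (fun φ hφ hcs hsupp => hR₀.rescale hε (by linarith) hφ hcs hsupp)
    (fun y hy hvy => norm_Bmap_rescale_le hdecay hC₁.le hε (by linarith) (by linarith) hy hvy.le)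
    0 (mem_ball_self (by norm_num)) (by simpa using hXu)
  rw [Bmap_comp_smul_add u (inv_pos.2 hε), norm_smul, Real.norm_of_nonneg (inv_pos.2 hε).le,
    smul_zero, zero_add, inv_mul_le_iff₀ hε] at hv
  calc ‖Bmap u X‖ ≤ C₃ * (ε ^ ((1:ℝ)/7) * ε ^ (1:ℝ)) := by rw [Real.rpow_one]; linarith
    _ = C₃ * 2 ^ ((8:ℝ)/7) * ‖X‖ ^ (-(8:ℝ)/7) := by
      rw [← Real.rpow_add hε, hεdef, Real.div_rpow zero_le_two hXpos.le, neg_div,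
        Real.rpow_neg hXpos.le]
      norm_num [div_eq_mul_inv, mul_assoc]

theorem stmt_19 (W : ℝ → ℝ) (hW : ContDiff ℝ 2 W)
    (hWpos : ∀ s ∈ Set.Ioo (-1:ℝ) 1, 0 < W s)
    (hWm1 : W (-1) = 0) (hWp1 : W 1 = 0)
    (hWm1' : deriv W (-1) = 0) (hWp1' : deriv W 1 = 0)
    (hWm1'' : iteratedDeriv 2 W (-1) = 2) (hWp1'' : iteratedDeriv 2 W 1 = 2)
    (hW0 : deriv W 0 = 0)
    (hWuniq : ∀ s ∈ Set.Ioo (-1:ℝ) 1, deriv W s = 0 → s = 0)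
    (u : E2 → ℝ) (hu : ContDiff ℝ 2 u) (hub : ∀ x, |u x| < 1)
    (heq : ∀ x, lap2 u x = deriv W (u x))
    (hmorse : finiteMorseIndex W u)
    (b : ℝ) (hb : b ∈ Set.Ioo (0:ℝ) 1)
    (C₁ R₁ : ℝ) (hC₁ : 0 < C₁) (hR₁ : 0 < R₁)
    -- the curvature decay `|B(u)(x)| ≤ C/|x|` on `{|u| ≤ 1-b}` outside `B_{R₁}` :
    (hdecay : ∀ x : E2, |u x| ≤ 1 - b → R₁ ≤ ‖x‖ → ‖Bmap u x‖ ≤ C₁ / ‖x‖)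
    -- the rescaled second-order estimate (Theorem 3.1) :
    (hthm : ∀ C₂ > (0:ℝ), ∃ C₃ > (0:ℝ), ∃ ε₀ > (0:ℝ), ∀ ε : ℝ, 0 < ε → ε < ε₀ →
      ∀ v : E2 → ℝ,
        ContDiffOn ℝ 2 v (Metric.ball (0:E2) 1) →
        (∀ x ∈ Metric.ball (0:E2) 1, |v x| < 1) →
        (∀ x ∈ Metric.ball (0:E2) 1, ε * lap2 v x = ε⁻¹ * deriv W (v x)) →
        (∀ φ : E2 → ℝ, ContDiff ℝ (⊤ : ℕ∞) φ → HasCompactSupport φ →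
          tsupport φ ⊆ Metric.ball (0:E2) 1 →
          0 ≤ ∫ x, (ε * ‖gradient φ x‖ ^ 2 + ε⁻¹ * iteratedDeriv 2 W (v x) * φ x ^ 2)) →
        (∀ x ∈ Metric.ball (0:E2) 1, |v x| < 1 - b → ‖Bmap v x‖ ≤ C₂) →
        ∀ x ∈ Metric.ball (0:E2) (1/2), |v x| < 1 - b →
          ‖Bmap v x‖ ≤ C₃ * ε ^ ((1:ℝ)/7)) :
    ∃ C' > (0:ℝ), ∃ R' > (0:ℝ), ∀ x : E2, |u x| < 1 - b → R' ≤ ‖x‖ →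
      ‖Bmap u x‖ ≤ C' * ‖x‖ ^ (-(8:ℝ)/7) :=
  stmt_19_general W hW u hu hub heq hmorse b C₁ R₁ hC₁ hdecay hthm

end
end
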